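/- arXiv:2206.00750 — 7 statements merged into one kernel-verified Lean document; each statement's English description precedes it below -/
import Mathlib

section
/- There exists a unique function H from the positive integers to the positive integers such that H(1) = 1 and H(n) = n − H(H(H(n−1))) for all n > 1; moreover this function satisfies 1 ≤ H(n) ≤ n for all n ≥ 1 (so the Hofstadter H recursion is well-defined). -/
/-!
Any solution of the recursion satisfies `1 ≤ H n ≤ n` for `n ≥ 1`: if `H (n-1)` lies in
`[1, n-1]`, so do its next two iterates, hence `H n = n - H (H (H (n-1)))` lies in `[1, n]`.
Strong induction then shows that two solutions agree, as the three inner arguments are already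
below `n`. A solution exists because the recursion, carried along with the bound `H n ≤ n`, is
well founded.
-/

-- The value at `0` is unconstrained.
def IsHofstadterH (H : ℕ → ℕ) : Prop :=
  H 1 = 1 ∧ ∀ n, 1 < n → H n + H (H (H (n - 1))) = n

namespace IsHofstadterH

variable {H G : ℕ → ℕ}

theorem add_two (hH : IsHofstadterH H) (n : ℕ) : H (n + 2) + H (H (H (n + 1))) = n + 2 :=
  hH.2 (n + 2) (by omega)

theorem mem_Icc (hH : IsHofstadterH H) : ∀ n, 1 ≤ n → H n ∈ Set.Icc 1 n := by
  intro n
  induction n using Nat.strong_induction_on with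
  | _ n ih =>
    intro hn
    obtain rfl | ⟨m, rfl⟩ : n = 1 ∨ ∃ m, n = m + 2 := by
      rcases n with _ | _ | m <;> simp_all
    · simp [hH.1]
    · have ha := ih (m + 1) (by omega) (by omega)
      have hb := ih (H (m + 1)) (by grind) ha.1
      have hc := ih (H (H (m + 1))) (by grind) hb.1
      have := hH.add_two m
      constructor <;> grind

theorem eq (hH : IsHofstadterH H) (hG : IsHofstadterH G) : ∀ n, 1 ≤ n → H n = G n := by
  intro n
  induction n using Nat.strong_induction_on with
  | _ n ih =>
    intro hn
    obtain rfl | ⟨m, rfl⟩ : n = 1 ∨ ∃ m, n = m + 2 := by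
      rcases n with _ | _ | m <;> simp_all
    · rw [hH.1, hG.1]
    · have ha := hG.mem_Icc (m + 1) (by omega)
      have hb := hG.mem_Icc _ ha.1
      have e1 : H (m + 1) = G (m + 1) := ih (m + 1) (by omega) (by omega)
      have e2 : H (G (m + 1)) = G (G (m + 1)) := ih _ (by grind) ha.1
      have e3 : H (G (G (m + 1))) = G (G (G (m + 1))) := ih _ (by grind) hb.1
      have hH' := hH.add_two m
      have hG' := hG.add_two m
      rw [e1, e2, e3] at hH'
      omega

end IsHofstadterH

def hofstadterHAux : (n : ℕ) → {k : ℕ // k ≤ n}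
  | 0 => ⟨0, le_rfl⟩
  | n + 1 =>
    let a := hofstadterHAux n
    let b := hofstadterHAux a.1
    let c := hofstadterHAux b.1
    ⟨n + 1 - c.1, Nat.sub_le _ _⟩
  decreasing_by all_goals grind

def hofstadterH (n : ℕ) : ℕ := (hofstadterHAux n).1

theorem hofstadterH_le (n : ℕ) : hofstadterH n ≤ n := (hofstadterHAux n).2

theorem hofstadterH_succ (n : ℕ) :
    hofstadterH (n + 1) = n + 1 - hofstadterH (hofstadterH (hofstadterH n)) := by
  rw [hofstadterH, hofstadterHAux]
  rfl

theorem isHofstadterH_hofstadterH : IsHofstadterH hofstadterH := by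
  have h0 : hofstadterH 0 = 0 := Nat.le_zero.mp (hofstadterH_le 0)
  refine ⟨by rw [hofstadterH_succ, h0, h0, h0], fun n hn => ?_⟩
  obtain ⟨m, rfl⟩ : ∃ m, n = m + 1 := ⟨n - 1, by omega⟩
  have h1 := hofstadterH_le m
  have h2 := hofstadterH_le (hofstadterH m)
  have h3 := hofstadterH_le (hofstadterH (hofstadterH m))
  rw [Nat.add_sub_cancel, hofstadterH_succ]
  omega

/-- There exists a unique function `H` from the positive integers
to the positive integers such that `H 1 = 1` and `H n = n - H (H (H (n-1)))` for
all `n > 1` (stated additively as `H n + H (H (H (n-1))) = n` to avoid truncated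
subtraction); moreover this function satisfies `1 ≤ H n ≤ n` for all `n ≥ 1`. -/
theorem hofstadter_H_exists_unique :
    ∃ H : ℕ → ℕ,
      (H 1 = 1 ∧ ∀ n, 1 < n → H n + H (H (H (n - 1))) = n) ∧
      (∀ n, 1 ≤ n → 1 ≤ H n ∧ H n ≤ n) ∧
      (∀ H' : ℕ → ℕ,
        (H' 1 = 1 ∧ ∀ n, 1 < n → H' n + H' (H' (H' (n - 1))) = n) →
        ∀ n, 1 ≤ n → H' n = H n) :=
  ⟨hofstadterH, isHofstadterH_hofstadterH, isHofstadterH_hofstadterH.mem_Icc,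
    fun _ hH' => IsHofstadterH.eq hH' isHofstadterH_hofstadterH⟩
end

section
/- Let n ≥ 1 and let n = h(k_1) + h(k_2) + … + h(k_m) with k_1 > k_2 > … > k_m be the greedy Narayana representation of n (k_1 is the largest index with h(k_1) ≤ n, and the remaining indices are obtained recursively from the remainder n − h(k_1)). Then k_j − k_{j+1} ≥ 3 for every 1 ≤ j < m, and H(n) = h(k_1 − 1) + h(k_2 − 1) + … + h(k_m − 1), where h(0) = 1. That is, H(n) is the right shift of the digits of n in the Narayana base. -/
/-- The Narayana sequence: `h 1 = 1`, `h 2 = 2`, `h 3 = 3`,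
`h k = h (k-1) + h (k-3)` for `k > 3`; additionally `h 0 = 1`. -/
def narayana : ℕ → ℕ
  | 0 => 1
  | 1 => 1
  | 2 => 2
  | 3 => 3
  | (k + 4) => narayana (k + 3) + narayana (k + 1)

/-!
Let `S` be the right shift of the greedy Narayana representation. Pushing `S` through a
leading digit gives `S (h j + x) = h (j - 1) + S x` for `x ≤ h (j - 2)`; at `x = h (j - 2)`
the carry `h j + h (j - 2) = h (j + 1)` is absorbed by the recurrence, and the same identity
yields the bound `S x ≤ h (j - 1)` for `x ≤ h j`. Every `n ≥ 5` can be written `h j + x` with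
`j ≥ 4` and `1 ≤ x ≤ h (j - 2)`, and the bound keeps `x - 1`, `S (x - 1)`, `S (S (x - 1))`
small enough to push `S` through three times; so `S n + S (S (S (n - 1))) = n` reduces to the
same identity for `x`. As `S` maps `[1, n)` into itself, the recursion then forces `H = S`.
-/

open Finset

theorem narayana_succ {k : ℕ} (hk : 1 ≤ k) :
    narayana (k + 1) = narayana k + narayana (k - 2) := by
  match k, hk with
  | 1, _ | 2, _ | j + 3, _ => rfl

theorem narayana_eq_sub_one_add_sub_three {k : ℕ} (hk : 2 ≤ k) :
    narayana k = narayana (k - 1) + narayana (k - 3) := by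
  obtain ⟨j, rfl⟩ := Nat.exists_eq_add_of_le' hk
  simpa using narayana_succ (k := j + 1) (by omega)

theorem narayana_pos (k : ℕ) : 0 < narayana k := by
  induction k using Nat.strong_induction_on with
  | _ k ih =>
    match k with
    | 0 | 1 | 2 | 3 => decide
    | k + 4 => exact Nat.add_pos_left (ih (k + 3) (by omega)) _

theorem narayana_lt_succ {k : ℕ} (hk : 1 ≤ k) : narayana k < narayana (k + 1) := by
  rw [narayana_succ hk]
  exact Nat.lt_add_of_pos_right (narayana_pos _)

theorem narayana_mono : Monotone narayana := by
  refine monotone_nat_of_le_succ fun k => ?_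
  rcases Nat.eq_zero_or_pos k with rfl | hk
  · decide
  · exact (narayana_lt_succ hk).le

theorem le_narayana (k : ℕ) : k ≤ narayana k := by
  induction k with
  | zero => exact Nat.zero_le _
  | succ k ih =>
    rcases Nat.eq_zero_or_pos k with rfl | hk
    · decide
    · exact Nat.succ_le_of_lt (ih.trans_lt (narayana_lt_succ hk))

def narayanaIndex (n : ℕ) : ℕ := Nat.findGreatest (fun t => narayana t ≤ n) n

theorem narayanaIndex_eq {n j : ℕ} (hle : narayana j ≤ n)
    (hlt : n < narayana (j + 1)) : narayanaIndex n = j :=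
  Nat.findGreatest_eq_iff.2 ⟨(le_narayana j).trans hle, fun _ => hle,
    fun _ hjt _ => (hlt.trans_le (narayana_mono hjt)).not_ge⟩

theorem exists_narayana_le_lt {n : ℕ} (hn : 1 ≤ n) :
    ∃ j, 1 ≤ j ∧ narayana j ≤ n ∧ n < narayana (j + 1) := by
  have h1 : narayana 1 ≤ n := hn
  refine ⟨narayanaIndex n, Nat.le_findGreatest hn h1,
    Nat.findGreatest_spec (P := fun t => narayana t ≤ n) hn h1, ?_⟩
  by_contra! hge
  have := Nat.le_findGreatest (P := fun t => narayana t ≤ n) ((le_narayana _).trans hge) hge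
  exact Nat.not_succ_le_self _ this

/-- The right shift of the greedy Narayana representation: `∑ h (k i) ↦ ∑ h (k i - 1)`. -/
def narayanaShift : ℕ → ℕ
  | 0 => 0
  | n + 1 => narayana (narayanaIndex (n + 1) - 1) +
      narayanaShift (n + 1 - narayana (narayanaIndex (n + 1)))
  decreasing_by have := narayana_pos (narayanaIndex (n + 1)); omega

theorem narayanaShift_zero : narayanaShift 0 = 0 := by
  rw [narayanaShift]

theorem narayanaShift_eq {n j : ℕ} (hle : narayana j ≤ n)
    (hlt : n < narayana (j + 1)) :
    narayanaShift n = narayana (j - 1) + narayanaShift (n - narayana j) := by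
  obtain ⟨n, rfl⟩ := Nat.exists_eq_add_of_le' ((narayana_pos j).trans_le hle)
  rw [narayanaShift, narayanaIndex_eq hle hlt]

theorem narayanaShift_narayana (j : ℕ) : narayanaShift (narayana j) = narayana (j - 1) := by
  have hpos : ∀ j, 1 ≤ j → narayanaShift (narayana j) = narayana (j - 1) := fun j hj => by
    rw [narayanaShift_eq le_rfl (narayana_lt_succ hj), Nat.sub_self, narayanaShift_zero,
      add_zero]
  rcases Nat.eq_zero_or_pos j with rfl | hj
  · exact hpos 1 le_rfl
  · exact hpos j hj

theorem narayanaShift_narayana_add {j x : ℕ} (hj : 2 ≤ j) (hx : x ≤ narayana (j - 2)) :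
    narayanaShift (narayana j + x) = narayana (j - 1) + narayanaShift x := by
  rcases hx.lt_or_eq with hx | rfl
  · have hlt : narayana j + x < narayana (j + 1) := by rw [narayana_succ (by omega)]; omega
    rw [narayanaShift_eq (Nat.le_add_right _ _) hlt, Nat.add_sub_cancel_left]
  · rw [← narayana_succ (by omega), narayanaShift_narayana, narayanaShift_narayana,
      Nat.add_sub_cancel, show j - 2 - 1 = j - 3 by omega, narayana_eq_sub_one_add_sub_three hj]

theorem narayanaShift_le_narayana {x j : ℕ} (hx : x ≤ narayana j) :
    narayanaShift x ≤ narayana (j - 1) := by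
  induction j using Nat.strong_induction_on generalizing x with
  | _ j ih =>
    obtain hj | ⟨i, rfl⟩ : j ≤ 2 ∨ ∃ i, j = i + 3 := by
      rcases le_or_gt j 2 with h | h
      exacts [.inl h, .inr ⟨j - 3, by omega⟩]
    · have hx2 : x ≤ 2 := hx.trans (narayana_mono hj)
      have hj1 : narayana (j - 1) = 1 := by interval_cases j <;> rfl
      rw [hj1]
      interval_cases x
      · simp [narayanaShift_zero]
      · exact (narayanaShift_narayana 1).le
      · exact (narayanaShift_narayana 2).le
    by_cases hxj : x ≤ narayana (i + 2)
    · exact (ih (i + 2) (by omega) hxj).trans (narayana_mono (by omega))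
    obtain ⟨y, rfl⟩ := Nat.exists_eq_add_of_le (not_le.1 hxj).le
    have hy : y ≤ narayana i := by
      have : narayana (i + 3) = narayana (i + 2) + narayana i := by
        simpa using narayana_eq_sub_one_add_sub_three (k := i + 3) (by omega)
      omega
    have hsy := ih i (by omega) hy
    have hrec : narayana (i + 2) = narayana (i + 1) + narayana (i - 1) := by
      simpa [show i + 1 - 2 = i - 1 by omega] using narayana_succ (k := i + 1) (by omega)
    rw [narayanaShift_narayana_add (j := i + 2) (by omega) (by simpa using hy)]
    show narayana (i + 1) + narayanaShift y ≤ narayana (i + 2)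
    omega

theorem narayanaShift_le (x : ℕ) : narayanaShift x ≤ x := by
  induction x using Nat.strong_induction_on with
  | _ x ih =>
    rcases Nat.eq_zero_or_pos x with rfl | hx
    · exact narayanaShift_zero.le
    obtain ⟨j, -, hle, hlt⟩ := exists_narayana_le_lt hx
    rw [narayanaShift_eq hle hlt]
    have := ih (x - narayana j) (by have := narayana_pos j; omega)
    have := narayana_mono (Nat.sub_le j 1)
    omega

theorem one_le_narayanaShift {x : ℕ} (hx : 1 ≤ x) : 1 ≤ narayanaShift x := by
  obtain ⟨j, -, hle, hlt⟩ := exists_narayana_le_lt hx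
  rw [narayanaShift_eq hle hlt]
  exact Nat.le_add_right_of_le (narayana_pos _)

theorem exists_eq_narayana_add {n : ℕ} (hn : 5 ≤ n) :
    ∃ j x, 4 ≤ j ∧ 1 ≤ x ∧ x ≤ narayana (j - 2) ∧ n = narayana j + x := by
  obtain ⟨k, hk, hle, hlt⟩ := exists_narayana_le_lt (n := n) (by omega)
  have hk4 : 4 ≤ k := by
    by_contra! hk4
    have : narayana (k + 1) ≤ narayana 4 := narayana_mono (by omega)
    have : narayana 4 = 4 := rfl
    omega
  rw [narayana_succ hk] at hlt
  rcases hle.lt_or_eq with hle | rfl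
  · exact ⟨k, n - narayana k, hk4, by omega, by omega, by omega⟩
  · have hk5 : 5 ≤ k := by
      by_contra! hk5
      have : k = 4 := by omega
      subst this
      have : narayana 4 = 4 := rfl
      omega
    refine ⟨k - 1, narayana (k - 3), by omega, narayana_pos _,
      by rw [show k - 1 - 2 = k - 3 by omega], narayana_eq_sub_one_add_sub_three (by omega)⟩

theorem narayanaShift_hofstadter_rec_narayana_add {j x : ℕ} (hj : 4 ≤ j) (hx1 : 1 ≤ x)
    (hx : x ≤ narayana (j - 2))
    (ih : narayanaShift x + narayanaShift (narayanaShift (narayanaShift (x - 1))) = x) :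
    narayanaShift (narayana j + x) +
        narayanaShift (narayanaShift (narayanaShift (narayana j + x - 1))) =
      narayana j + x := by
  have hx' : x - 1 ≤ narayana (j - 2) := by omega
  have hS1 : narayanaShift (x - 1) ≤ narayana (j - 1 - 2) := by
    rw [show j - 1 - 2 = j - 2 - 1 by omega]
    exact narayanaShift_le_narayana hx'
  have hS2 : narayanaShift (narayanaShift (x - 1)) ≤ narayana (j - 1 - 1 - 2) := by
    rw [show j - 1 - 1 - 2 = j - 1 - 2 - 1 by omega]
    exact narayanaShift_le_narayana hS1
  rw [narayanaShift_narayana_add (by omega) hx,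
    show narayana j + x - 1 = narayana j + (x - 1) by omega,
    narayanaShift_narayana_add (by omega) hx', narayanaShift_narayana_add (by omega) hS1,
    narayanaShift_narayana_add (by omega) hS2,
    narayana_eq_sub_one_add_sub_three (k := j) (by omega), show j - 1 - 1 - 1 = j - 3 by omega]
  omega

theorem narayanaShift_hofstadter_rec {n : ℕ} (hn : 1 ≤ n) :
    narayanaShift n + narayanaShift (narayanaShift (narayanaShift (n - 1))) = n := by
  induction n using Nat.strong_induction_on with
  | _ n ih =>
    rcases le_or_gt n 4 with hn4 | hn5
    · have h1 : narayanaShift 1 = 1 := narayanaShift_narayana 1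
      have h2 : narayanaShift 2 = 1 := narayanaShift_narayana 2
      have h3 : narayanaShift 3 = 2 := narayanaShift_narayana 3
      have h4 : narayanaShift 4 = 3 := narayanaShift_narayana 4
      interval_cases n <;> simp [narayanaShift_zero, h1, h2, h3, h4]
    obtain ⟨j, x, hj, hx1, hx, rfl⟩ := exists_eq_narayana_add hn5
    exact narayanaShift_hofstadter_rec_narayana_add hj hx1 hx
      (ih x (by have := narayana_pos j; omega) hx1)

theorem eq_narayanaShift_of_hofstadter_rec (H : ℕ → ℕ) (hH1 : H 1 = 1)
    (hHrec : ∀ n, 1 < n → H n + H (H (H (n - 1))) = n) {n : ℕ} (hn : 1 ≤ n) :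
    H n = narayanaShift n := by
  induction n using Nat.strong_induction_on with
  | _ n ih =>
    rcases hn.eq_or_lt with rfl | hn1
    · exact hH1.trans (narayanaShift_narayana 1).symm
    have hmaps : ∀ x, 1 ≤ x → x < n → 1 ≤ narayanaShift x ∧ narayanaShift x < n :=
      fun x hx hxn => ⟨one_le_narayanaShift hx, (narayanaShift_le x).trans_lt hxn⟩
    have h1 := hmaps (n - 1) (by omega) (by omega)
    have h2 := hmaps _ h1.1 h1.2
    have hH := hHrec n hn1
    rw [ih (n - 1) (by omega) (by omega), ih _ h1.2 h1.1, ih _ h2.2 h2.1] at hH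
    have hS := narayanaShift_hofstadter_rec hn
    omega

theorem narayanaShift_sum_Ico {k : ℕ → ℕ} {m : ℕ}
    (hk : ∀ j < m, ∑ i ∈ Ico j m, narayana (k i) < narayana (k j + 1))
    {j : ℕ} (hj : j ≤ m) :
    narayanaShift (∑ i ∈ Ico j m, narayana (k i)) = ∑ i ∈ Ico j m, narayana (k i - 1) := by
  induction hj using Nat.decreasingInduction with
  | self => simp [narayanaShift_zero]
  | of_succ j hjm ih =>
    have hlt := hk j hjm
    rw [sum_eq_sum_Ico_succ_bot hjm] at hlt
    rw [sum_eq_sum_Ico_succ_bot hjm, sum_eq_sum_Ico_succ_bot hjm,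
      narayanaShift_eq (Nat.le_add_right _ _) hlt, Nat.add_sub_cancel_left, ih]

theorem add_three_le_of_narayana_add_lt {a b t : ℕ}
    (hlt : narayana a + t < narayana (a + 1)) (hb : narayana b ≤ t) : b + 3 ≤ a := by
  rcases Nat.eq_zero_or_pos a with rfl | ha
  · simp [narayana] at hlt
  rw [narayana_succ ha] at hlt
  have : b < a - 2 := narayana_mono.reflect_lt (by omega)
  omega

theorem hofstadter_H_right_shift_narayana_general
    (H : ℕ → ℕ) (hH1 : H 1 = 1)
    (hHrec : ∀ n, 1 < n → H n + H (H (H (n - 1))) = n)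
    (n : ℕ) (hn : 1 ≤ n) (m : ℕ) (k : ℕ → ℕ)
    (hsum : n = ∑ j ∈ Finset.range m, narayana (k j))
    (hgreedy : ∀ j, j < m →
      narayana (k j) ≤ n - ∑ i ∈ Finset.range j, narayana (k i) ∧
      ∀ t, 1 ≤ t → narayana t ≤ n - ∑ i ∈ Finset.range j, narayana (k i) →
        t ≤ k j) :
    (∀ j, j + 1 < m → k (j + 1) + 3 ≤ k j) ∧
    H n = ∑ j ∈ Finset.range m, narayana (k j - 1) := by
  have hrem : ∀ j ≤ m,
      n - ∑ i ∈ range j, narayana (k i) = ∑ i ∈ Ico j m, narayana (k i) := by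
    intro j hj
    rw [hsum, ← sum_range_add_sum_Ico _ hj, Nat.add_sub_cancel_left]
  have hdigit : ∀ j < m, ∑ i ∈ Ico j m, narayana (k i) < narayana (k j + 1) := by
    intro j hj
    rw [← hrem j hj.le]
    by_contra! hge
    exact Nat.not_succ_le_self _ ((hgreedy j hj).2 _ (Nat.le_add_left _ _) hge)
  refine ⟨fun j hj => ?_, ?_⟩
  · have hlt := hdigit j (by omega)
    have hnext := (hgreedy (j + 1) hj).1
    rw [sum_eq_sum_Ico_succ_bot (by omega)] at hlt
    rw [hrem _ hj.le] at hnext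
    exact add_three_le_of_narayana_add_lt hlt hnext
  · rw [eq_narayanaShift_of_hofstadter_rec H hH1 hHrec hn, hsum, range_eq_Ico,
      narayanaShift_sum_Ico hdigit (Nat.zero_le m)]

/-- Let `n ≥ 1` and let `n = h (k 0) + h (k 1) + ⋯ + h (k (m-1))`
be the greedy Narayana representation of `n`: at each step `k j` is the largest
index (among indices `≥ 1`) whose Narayana number is at most the remainder
`n - (h (k 0) + ⋯ + h (k (j-1)))`.  Then consecutive indices differ by at least `3`,
and `H n = h (k 0 - 1) + ⋯ + h (k (m-1) - 1)` (with `h 0 = 1`): `H n` is the right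
shift of the digits of `n` in the Narayana base.  Here `H` is the Hofstadter `H`
sequence, characterized by `H 1 = 1` and `H n + H (H (H (n-1))) = n` for `n > 1`. -/
theorem hofstadter_H_right_shift_narayana
    (H : ℕ → ℕ) (hH1 : H 1 = 1)
    (hHrec : ∀ n, 1 < n → H n + H (H (H (n - 1))) = n)
    (n : ℕ) (hn : 1 ≤ n) (m : ℕ) (hm : 1 ≤ m) (k : ℕ → ℕ)
    (hkpos : ∀ j, j < m → 1 ≤ k j)
    (hsum : n = ∑ j ∈ Finset.range m, narayana (k j))
    (hgreedy : ∀ j, j < m →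
      narayana (k j) ≤ n - ∑ i ∈ Finset.range j, narayana (k i) ∧
      ∀ t, 1 ≤ t → narayana t ≤ n - ∑ i ∈ Finset.range j, narayana (k i) →
        t ≤ k j) :
    (∀ j, j + 1 < m → k (j + 1) + 3 ≤ k j) ∧
    H n = ∑ j ∈ Finset.range m, narayana (k j - 1) :=
  hofstadter_H_right_shift_narayana_general H hH1 hHrec n hn m k hsum hgreedy
end

section
/- Let β = m_0 + m_1·α + m_2·α² where m_0, m_1, m_2 are integers (i.e., β ∈ ℤ[α]). Then ‖β·h(k)‖ decreases exponentially as k → ∞: there exist a constant C > 0 and a real number 0 < ρ < 1 such that ‖β·h(k)‖ ≤ C·ρ^k for all k ≥ 1. -/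
/-!
The root `α` of `x³ + x = 1` is the reciprocal of the dominant root of the Narayana
characteristic polynomial `x³ - x² - 1 = (x - 1/α) (x² + α² x + α)`.  Hence the error
`X k = α h(k+1) - h(k)` solves the recurrence with characteristic polynomial `x² + α² x + α`,
whose roots have modulus `√α < 1`, so `X` decays like `√α ^ k`.  Finally
`β h(k+2)` differs from the integer `m₀ h(k+2) + m₁ h(k+1) + m₂ h(k)` by a fixed linear
combination of `X (k+1)` and `X k`.
-/

/-- Distance from a real number to the nearest integer. -/
noncomputable def distToInt (x : ℝ) : ℝ := |x - round x|

theorem distToInt_le_abs_sub (x : ℝ) (n : ℤ) : distToInt x ≤ |x - n| := round_le x n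

theorem distToInt_le_half (x : ℝ) : distToInt x ≤ 1 / 2 := abs_sub_round x

theorem narayana_add_three (k : ℕ) : narayana (k + 3) = narayana (k + 2) + narayana k := by
  cases k <;> rfl

/-- The hypothesis `p² < 4ρ²` says that the characteristic roots are non-real, of modulus `ρ`. -/
theorem exists_abs_le_mul_pow_of_recurrence {p ρ : ℝ} (hρ : 0 ≤ ρ) (hpρ : p ^ 2 < 4 * ρ ^ 2)
    {X : ℕ → ℝ} (hX : ∀ k, X (k + 2) + p * X (k + 1) + ρ ^ 2 * X k = 0) :
    ∃ D, ∀ k, |X k| ≤ D * ρ ^ k := by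
  -- This quadratic form is multiplied by `ρ²` at every step and is positive definite.
  set E : ℕ → ℝ := fun k => X (k + 1) ^ 2 + p * X (k + 1) * X k + ρ ^ 2 * X k ^ 2
  have hE_pow : ∀ k, E k = (ρ ^ k) ^ 2 * E 0 := by
    intro k
    induction k with
    | zero => simp
    | succ k ih =>
      have hE_succ : E (k + 1) = ρ ^ 2 * E k := by
        have hXk : X (k + 2) = -p * X (k + 1) - ρ ^ 2 * X k := by linear_combination hX k
        simp only [E, hXk]
        ring
      rw [hE_succ, ih]
      ring
  have hE_ge : ∀ k, (4 * ρ ^ 2 - p ^ 2) * X k ^ 2 ≤ 4 * E k := fun k => by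
    nlinarith [sq_nonneg (2 * X (k + 1) + p * X k)]
  set K := 4 * E 0 / (4 * ρ ^ 2 - p ^ 2)
  refine ⟨√K, fun k => ?_⟩
  have hXsq : X k ^ 2 ≤ (ρ ^ k) ^ 2 * K := by
    rw [mul_div_assoc', le_div_iff₀ (by linarith)]
    linarith [hE_ge k, hE_pow k]
  calc |X k| ≤ √((ρ ^ k) ^ 2 * K) := Real.abs_le_sqrt hXsq
    _ = √K * ρ ^ k := by
      rw [Real.sqrt_mul (sq_nonneg _), Real.sqrt_sq (pow_nonneg hρ k), mul_comm]

section NarayanaRoot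

variable {α : ℝ}

theorem pos_and_lt_one_of_pow_three_add_self_eq_one (hα : α ^ 3 + α = 1) : 0 < α ∧ α < 1 := by
  have hα0 : 0 < α := by nlinarith [sq_nonneg α]
  exact ⟨hα0, by nlinarith [pow_pos hα0 3]⟩

theorem narayana_error_recurrence (hα : α ^ 3 + α = 1) (k : ℕ) :
    (α * narayana (k + 3) - narayana (k + 2)) + α ^ 2 * (α * narayana (k + 2) - narayana (k + 1))
      + α * (α * narayana (k + 1) - narayana k) = 0 := by
  rw [narayana_add_three k]
  push_cast
  linear_combination (narayana (k + 2) : ℝ) * hα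

theorem exists_distToInt_mul_narayana_add_two_le (hα : α ^ 3 + α = 1) (m0 m1 m2 : ℤ) :
    ∃ D, ∀ k, distToInt ((m0 + m1 * α + m2 * α ^ 2) * narayana (k + 2)) ≤ D * √α ^ k := by
  have hα0 := (pos_and_lt_one_of_pow_three_add_self_eq_one hα).1
  set X : ℕ → ℝ := fun k => α * narayana (k + 1) - narayana k
  set Y : ℕ → ℝ := fun k => (m1 + m2 * α) * X (k + 1) + m2 * X k
  have hY : ∀ k, Y (k + 2) + α ^ 2 * Y (k + 1) + α * Y k = 0 := fun k => by
    linear_combination (m1 + m2 * α) * narayana_error_recurrence hα (k + 1)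
      + m2 * narayana_error_recurrence hα k
  have hα_sq : √α ^ 2 = α := Real.sq_sqrt hα0.le
  obtain ⟨D, hD⟩ := exists_abs_le_mul_pow_of_recurrence (p := α ^ 2) (X := Y) (Real.sqrt_nonneg α)
    (by rw [hα_sq]; nlinarith [pow_pos hα0 3]) (by rwa [hα_sq])
  refine ⟨D, fun k => ?_⟩
  calc distToInt _
      ≤ |(m0 + m1 * α + m2 * α ^ 2) * narayana (k + 2)
          - ((m0 * narayana (k + 2) + m1 * narayana (k + 1) + m2 * narayana k : ℤ) : ℝ)| :=
        distToInt_le_abs_sub _ _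
    _ = |Y k| := by
      simp only [Y, X]
      push_cast
      ring_nf
    _ ≤ D * √α ^ k := hD k

end NarayanaRoot

/-- Let `α` be the (unique) real root of `x³ + x = 1` and let
`β = m₀ + m₁·α + m₂·α² ∈ ℤ[α]`.  Then `‖β · h k‖` decreases exponentially:
there are `C > 0` and `0 < ρ < 1` with `‖β · h k‖ ≤ C · ρ ^ k` for all `k ≥ 1`. -/
theorem distToInt_narayana_exponential_decay
    (α : ℝ) (hα : α ^ 3 + α = 1) (m0 m1 m2 : ℤ) :
    ∃ C : ℝ, 0 < C ∧ ∃ ρ : ℝ, 0 < ρ ∧ ρ < 1 ∧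
      ∀ k : ℕ, 1 ≤ k →
        distToInt (((m0 : ℝ) + (m1 : ℝ) * α + (m2 : ℝ) * α ^ 2) * (narayana k : ℝ))
          ≤ C * ρ ^ k := by
  obtain ⟨hα0, hα1⟩ := pos_and_lt_one_of_pow_three_add_self_eq_one hα
  obtain ⟨D, hD⟩ := exists_distToInt_mul_narayana_add_two_le hα m0 m1 m2
  have hρ0 : 0 < √α := Real.sqrt_pos.mpr hα0
  have hρ1 : √α < 1 := by simpa using Real.sqrt_lt_sqrt hα0.le hα1
  set C := max (D / √α ^ 2) (1 / (2 * √α))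
  refine ⟨C, lt_max_of_lt_right (by positivity), √α, hρ0, hρ1, ?_⟩
  rintro (_ | _ | k) hk
  · omega
  · calc distToInt _ ≤ 1 / 2 := distToInt_le_half _
      _ = 1 / (2 * √α) * √α ^ 1 := by field_simp
      _ ≤ C * √α ^ 1 := by gcongr; exact le_max_right _ _
  · calc distToInt _ ≤ D * √α ^ k := hD k
      _ = D / √α ^ 2 * √α ^ (k + 2) := by field_simp; ring
      _ ≤ C * √α ^ (k + 2) := by gcongr; exact le_max_left _ _
end

section
/- Let a be a sequence of mild signature, b : ℕ → ℤ any sequence of integers, and A the replacement sequence of a by b. If γ is a real number such that ∑_{i=1}^{∞} ‖γ·b(i)‖ < ∞, then the sequence of Weyl sums x_N = (1/N)·∑_{n=0}^{N−1} e(γ·A(n)) converges to some complex number as N → ∞. -/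
open Filter

/-- `e x = exp (2 π i x)`. -/
noncomputable def expCirc (x : ℝ) : ℂ := Complex.exp (2 * Real.pi * Complex.I * x)

/-- Auxiliary fueled greedy algorithm: given the base sequence `a` and a remainder `r`,
repeatedly subtract the largest `a i` (with `i ≥ 1`) not exceeding the remainder,
recording the list of indices used (with multiplicity). -/
def greedyIdxAux (a : ℕ → ℕ) : ℕ → ℕ → List ℕ
  | 0, _ => []
  | fuel + 1, r =>
    if r = 0 then []
    else
      let i := Nat.findGreatest (fun j => 1 ≤ j ∧ a j ≤ r) r
      i :: greedyIdxAux a fuel (r - a i)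

/-- The list of indices (with multiplicity) appearing in the greedy representation
of `n` in base `a`: `n = ∑_{i ∈ greedyIdx a n} a i`, where at each step the largest
`a i` not exceeding the remainder is subtracted. -/
def greedyIdx (a : ℕ → ℕ) (n : ℕ) : List ℕ := greedyIdxAux a n n

/-- Auxiliary fueled greedy algorithm with the indices capped by `cap`. -/
def greedyIdxCapAux (a : ℕ → ℕ) (cap : ℕ) : ℕ → ℕ → List ℕ
  | 0, _ => []
  | fuel + 1, r =>
    if r = 0 then []
    else
      let i := Nat.findGreatest (fun j => 1 ≤ j ∧ j ≤ cap ∧ a j ≤ r) r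
      i :: greedyIdxCapAux a cap fuel (r - a i)

/-- The greedy representation of `n` in base `a` using only indices `≤ cap`. -/
def greedyIdxCap (a : ℕ → ℕ) (cap n : ℕ) : List ℕ := greedyIdxCapAux a cap n n

/-- A strictly increasing sequence `a` with `a 1 = 1` has *mild signature* if:
(i) there is a constant `L` such that for every `n ≥ 2` the greedy representation
of `a n` in base `a` using only earlier terms `a 1, …, a (n-1)` only uses the
terms `a (n-1), …, a (n-L)`; and (ii) there are reals `r, s > 1` with
`r · a n < a (n+1) < s · a n` for every `n ≥ 1`. -/
structure MildSignature (a : ℕ → ℕ) : Prop where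
  a_one : a 1 = 1
  mono : ∀ n, 1 ≤ n → a n < a (n + 1)
  signature : ∃ L : ℕ, ∀ n, 2 ≤ n → ∀ i ∈ greedyIdxCap a (n - 1) (a n), n ≤ i + L
  growth : ∃ r s : ℝ, 1 < r ∧ 1 < s ∧ ∀ n, 1 ≤ n →
    r * (a n : ℝ) < (a (n + 1) : ℝ) ∧ (a (n + 1) : ℝ) < s * (a n : ℝ)

/-- The replacement sequence of `a` by `b`: write `n` greedily in base `a` and
replace each occurrence of `a i` by `b i`. -/
def replSeq (a : ℕ → ℕ) (b : ℕ → ℤ) (n : ℕ) : ℤ := ((greedyIdx a n).map b).sum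

/-!
Write `S N = ∑_{n<N} e(γ A(n))` and `y k = S (a k) / a k`. If `a k ≤ a k + m < a (k+1)`, the
greedy expansion of `a k + m` is `a k` followed by that of `m`, so `S (a k + m) = S (a k) +
e(γ b k) S m`. For `a (k+1)` itself, whose remainder `a (k+1) - a k` has its greedy digits among
`k - L, …, k` by the signature condition, this writes `y (k+1)` as a convex combination of
`y (k-L), …, y k` giving weight at least `a k / a (k+1) > 1/s` to `y k`, up to an error bounded by
`s ∑_{t ≤ L} ‖e(γ b (k-t)) - 1‖`, which is summable. Such almost-averaging sequences converge:
for real ones, every `L + 1` steps the oscillation over a window shrinks by the factor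
`1 - s^{-(L+1)}` up to the tail of the errors, and complex ones are handled through their real and
imaginary parts. Once `y k → z`, expanding a general `N` greedily bounds `‖S N - N z‖` by the sum
over its digits `j` of `a j (‖y j - z‖ + (s - 1) ‖e(γ b j) - 1‖)`, which is `o(N)`.
-/

open Finset Topology

lemma tendsto_zero_of_le_mul_add {d e : ℕ → ℝ} {r : ℝ} (hr0 : 0 ≤ r) (hr1 : r < 1)
    (hd : ∀ n, 0 ≤ d n) (hde : ∀ n, d (n + 1) ≤ r * d n + e n)
    (he : Tendsto e atTop (𝓝 0)) : Tendsto d atTop (𝓝 0) := by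
  rw [Metric.tendsto_atTop]
  intro ε hε
  obtain ⟨N, hN⟩ := (he.eventually (gt_mem_nhds (by nlinarith : 0 < (1 - r) * (ε / 2))))
    |>.exists_forall_of_atTop
  have hbound : ∀ t, d (N + t) ≤ r ^ t * d N + ε / 2 := by
    intro t
    induction t with
    | zero => simp only [add_zero, pow_zero, one_mul]; linarith
    | succ t ih =>
      have := hN (N + t) (by omega)
      calc d (N + (t + 1)) ≤ r * d (N + t) + e (N + t) := hde (N + t)
        _ ≤ r * (r ^ t * d N + ε / 2) + (1 - r) * (ε / 2) := by gcongr
        _ = r ^ (t + 1) * d N + ε / 2 := by ring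
  obtain ⟨T, hT⟩ := ((tendsto_pow_atTop_nhds_zero_of_lt_one hr0 hr1).mul_const (d N)).eventually
    (gt_mem_nhds (by rw [zero_mul]; exact half_pos hε)) |>.exists_forall_of_atTop
  refine ⟨N + T, fun n hn => ?_⟩
  obtain ⟨t, rfl⟩ := Nat.exists_eq_add_of_le (le_of_add_le_left hn)
  rw [Real.dist_eq, sub_zero, abs_of_nonneg (hd _)]
  linarith [hbound t, hT t (by omega)]

lemma List.sum_map_eq_sum_count_smul {ι M : Type*} [DecidableEq ι] [AddCommMonoid M]
    {l : List ι} {S : Finset ι} (hl : ∀ x ∈ l, x ∈ S) (f : ι → M) :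
    (l.map f).sum = ∑ x ∈ S, l.count x • f x := by
  rw [sum_list_map_count]
  refine sum_subset (fun x hx => hl x (List.mem_toFinset.1 hx)) fun x _ hx => ?_
  rw [List.count_eq_zero_of_not_mem (mt List.mem_toFinset.2 hx), zero_smul]

lemma summable_sum_range_sub {f : ℕ → ℝ} (hf : Summable f) (n : ℕ) :
    Summable fun k => ∑ t ∈ range n, f (k - t) :=
  summable_sum fun t _ => (summable_nat_add_iff t).1 (by simpa using hf)

def IsAlmostWindowAverage {E : Type*} [SeminormedAddCommGroup E] [Module ℝ E]
    (y : ℕ → E) (L K : ℕ) (c : ℝ) (η : ℕ → ℝ) : Prop :=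
  ∀ k, K ≤ k → ∃ w : ℕ → ℝ, (∀ j, 0 ≤ w j) ∧ ∑ j ∈ Icc (k - L) k, w j = 1 ∧ c ≤ w k ∧
    ‖y (k + 1) - ∑ j ∈ Icc (k - L) k, w j • y j‖ ≤ η k

noncomputable def windowOsc (y : ℕ → ℝ) (L k : ℕ) : ℝ :=
  (Icc (k - L) k).sup' (nonempty_Icc.2 (Nat.sub_le k L)) y -
    (Icc (k - L) k).inf' (nonempty_Icc.2 (Nat.sub_le k L)) y

lemma windowOsc_nonneg (y : ℕ → ℝ) (L k : ℕ) : 0 ≤ windowOsc y L k :=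
  sub_nonneg.2 <| (inf'_le y (right_mem_Icc.2 (Nat.sub_le k L))).trans
    (le_sup' y (right_mem_Icc.2 (Nat.sub_le k L)))

namespace IsAlmostWindowAverage

section Normed

variable {E F : Type*} [SeminormedAddCommGroup E] [NormedSpace ℝ E]
  [SeminormedAddCommGroup F] [NormedSpace ℝ F] {y : ℕ → E} {L K : ℕ} {c : ℝ} {η : ℕ → ℝ}

lemma map (h : IsAlmostWindowAverage y L K c η) (f : E →L[ℝ] F) (hf : ‖f‖ ≤ 1) :
    IsAlmostWindowAverage (fun k => f (y k)) L K c η := by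
  intro k hk
  obtain ⟨w, hw0, hw1, hwk, hη⟩ := h k hk
  refine ⟨w, hw0, hw1, hwk, ?_⟩
  calc ‖f (y (k + 1)) - ∑ j ∈ Icc (k - L) k, w j • f (y j)‖
      = ‖f (y (k + 1) - ∑ j ∈ Icc (k - L) k, w j • y j)‖ := by simp [map_sub, map_sum]
    _ ≤ 1 * ‖y (k + 1) - ∑ j ∈ Icc (k - L) k, w j • y j‖ := f.le_of_opNorm_le hf _
    _ ≤ η k := by rwa [one_mul]

lemma neg (h : IsAlmostWindowAverage y L K c η) :
    IsAlmostWindowAverage (fun k => -y k) L K c η := by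
  simpa using h.map (-ContinuousLinearMap.id ℝ E) (by
    rw [norm_neg]; exact ContinuousLinearMap.norm_id_le)

lemma le_one (h : IsAlmostWindowAverage y L K c η) : c ≤ 1 := by
  obtain ⟨w, hw0, hw1, hwK, -⟩ := h K le_rfl
  exact hwK.trans <| hw1 ▸ single_le_sum (fun j _ => hw0 j) (right_mem_Icc.2 (Nat.sub_le K L))

end Normed

variable {y : ℕ → ℝ} {L K : ℕ} {c : ℝ} {η : ℕ → ℝ}

lemma le_sub_mul_add (h : IsAlmostWindowAverage y L K c η) {k : ℕ} (hk : K ≤ k) {H : ℝ}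
    (hH : ∀ j ∈ Icc (k - L) k, y j ≤ H) : y (k + 1) ≤ H - c * (H - y k) + η k := by
  obtain ⟨w, hw0, hw1, hwk, hη⟩ := h k hk
  have hkW : k ∈ Icc (k - L) k := right_mem_Icc.2 (Nat.sub_le k L)
  have hrest : ∑ j ∈ (Icc (k - L) k).erase k, w j * y j ≤ (1 - w k) * H := by
    rw [← hw1, ← add_sum_erase _ _ hkW, add_sub_cancel_left, sum_mul]
    exact sum_le_sum fun j hj => mul_le_mul_of_nonneg_left (hH j (mem_of_mem_erase hj)) (hw0 j)
  rw [← add_sum_erase _ _ hkW] at hη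
  simp only [smul_eq_mul, Real.norm_eq_abs] at hη
  nlinarith [(abs_le.1 hη).2, mul_le_mul_of_nonneg_right hwk (sub_nonneg.2 (hH k hkW))]

variable (hη0 : ∀ k, 0 ≤ η k) (hc0 : 0 ≤ c)
include hη0 hc0

lemma le_add_tsum (h : IsAlmostWindowAverage y L K c η) (hη : Summable η) {k : ℕ} (hk : K ≤ k)
    {H : ℝ} (hH : ∀ j ∈ Icc (k - L) k, y j ≤ H) {j : ℕ} (hj : k - L ≤ j) :
    y j ≤ H + ∑' t, η (t + k) := by
  have hpartial : ∀ i, ∀ j ∈ Icc (k - L) (k + i), y j ≤ H + ∑ t ∈ range i, η (t + k) := by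
    intro i
    induction i with
    | zero => simpa using hH
    | succ i ih =>
      intro j hj
      rw [sum_range_succ]
      rcases (mem_Icc.1 hj).2.lt_or_eq with hlt | rfl
      · linarith [ih j (mem_Icc.2 ⟨(mem_Icc.1 hj).1, by omega⟩), hη0 (i + k)]
      · have hwin : ∀ j ∈ Icc (k + i - L) (k + i), y j ≤ H + ∑ t ∈ range i, η (t + k) :=
          fun j hj => ih j (mem_Icc.2 ⟨by simp only [mem_Icc] at hj; omega, (mem_Icc.1 hj).2⟩)
        have := h.le_sub_mul_add (by omega) hwin
        have := hwin (k + i) (right_mem_Icc.2 (Nat.sub_le _ _))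
        rw [add_comm i k, ← add_assoc]
        nlinarith
  refine (hpartial j j (mem_Icc.2 ⟨hj, by omega⟩)).trans (add_le_add_right ?_ H)
  exact ((summable_nat_add_iff k).2 hη).sum_le_tsum _ fun t _ => hη0 _

lemma le_sub_pow_mul_add (h : IsAlmostWindowAverage y L K c η) {k : ℕ} (hk : K ≤ k) {H : ℝ}
    (hH : ∀ j, k - L ≤ j → y j ≤ H) (i : ℕ) :
    y (k + i) ≤ H - c ^ i * (H - y k) + ∑ t ∈ range i, η (t + k) := by
  induction i with
  | zero => simp
  | succ i ih =>
    have hstep := h.le_sub_mul_add (k := k + i) (by omega) fun j hj =>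
      hH j (by simp only [mem_Icc] at hj; omega)
    have hE : 0 ≤ ∑ t ∈ range i, η (t + k) := sum_nonneg fun t _ => hη0 _
    rw [sum_range_succ, pow_succ, ← add_assoc, add_comm i k]
    nlinarith [mul_le_mul_of_nonneg_left ih hc0, h.le_one, hE]

variable (hη : Summable η)
include hη

lemma le_of_mem_next_window (h : IsAlmostWindowAverage y L K c η) {k : ℕ} (hk : K ≤ k)
    {H : ℝ} (hH : ∀ j ∈ Icc (k - L) k, y j ≤ H) {j : ℕ} (hj : j ∈ Icc (k + 1) (k + (L + 1))) :
    y j ≤ H + 2 * ∑' t, η (t + k) - c ^ (L + 1) * (H + ∑' t, η (t + k) - y k) := by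
  set Θ := ∑' t, η (t + k)
  have hH' : ∀ j, k - L ≤ j → y j ≤ H + Θ := fun j => h.le_add_tsum hη0 hc0 hη hk hH
  simp only [mem_Icc] at hj
  obtain ⟨i, rfl⟩ := Nat.exists_eq_add_of_le (by omega : k ≤ j)
  have hpow : c ^ (L + 1) ≤ c ^ i := pow_le_pow_of_le_one hc0 h.le_one (by omega)
  have hE : ∑ t ∈ range i, η (t + k) ≤ Θ :=
    ((summable_nat_add_iff k).2 hη).sum_le_tsum _ fun t _ => hη0 _
  nlinarith [h.le_sub_pow_mul_add hη0 hc0 hk hH' i,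
    mul_le_mul_of_nonneg_right hpow (sub_nonneg.2 (hH' k (Nat.sub_le k L)))]

lemma windowOsc_add_le (h : IsAlmostWindowAverage y L K c η) {k : ℕ} (hk : K ≤ k) :
    windowOsc y L (k + (L + 1)) ≤
      (1 - c ^ (L + 1)) * windowOsc y L k + 4 * ∑' t, η (t + k) := by
  have hW : ∀ j ∈ Icc (k + (L + 1) - L) (k + (L + 1)), j ∈ Icc (k + 1) (k + (L + 1)) :=
    fun j hj => by simp only [mem_Icc] at hj ⊢; omega
  set Θ := ∑' t, η (t + k)
  set M := (Icc (k - L) k).sup' (nonempty_Icc.2 (Nat.sub_le k L)) y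
  set m := (Icc (k - L) k).inf' (nonempty_Icc.2 (Nat.sub_le k L)) y
  have hsup : (Icc (k + (L + 1) - L) (k + (L + 1))).sup' (nonempty_Icc.2 (Nat.sub_le _ L)) y ≤
      M + 2 * Θ - c ^ (L + 1) * (M + Θ - y k) :=
    sup'_le _ y fun j hj =>
      h.le_of_mem_next_window hη0 hc0 hη hk (fun j hj => le_sup' y hj) (hW j hj)
  have hinf : m - 2 * Θ + c ^ (L + 1) * (Θ - m + y k) ≤
      (Icc (k + (L + 1) - L) (k + (L + 1))).inf' (nonempty_Icc.2 (Nat.sub_le _ L)) y :=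
    le_inf' _ y fun j hj => by
      linarith [h.neg.le_of_mem_next_window hη0 hc0 hη hk (H := -m)
        (fun j hj => neg_le_neg (inf'_le y hj)) (hW j hj)]
  have hΘ : 0 ≤ Θ := tsum_nonneg fun t => hη0 _
  unfold windowOsc
  nlinarith [pow_nonneg hc0 (L + 1)]

lemma abs_sub_le_windowOsc_add (h : IsAlmostWindowAverage y L K c η) {k : ℕ} (hk : K ≤ k)
    {j : ℕ} (hj : k ≤ j) : |y j - y k| ≤ windowOsc y L k + ∑' t, η (t + k) := by
  have hkW : k ∈ Icc (k - L) k := right_mem_Icc.2 (Nat.sub_le k L)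
  set M := (Icc (k - L) k).sup' (nonempty_Icc.2 (Nat.sub_le k L)) y
  set m := (Icc (k - L) k).inf' (nonempty_Icc.2 (Nat.sub_le k L)) y
  have hup := h.le_add_tsum hη0 hc0 hη hk (H := M) (fun j hj => le_sup' y hj) (j := j)
    (by omega)
  have hlow := h.neg.le_add_tsum hη0 hc0 hη hk (H := -m) (fun j hj => neg_le_neg (inf'_le y hj))
    (j := j) (by omega)
  unfold windowOsc
  rw [abs_sub_le_iff]
  constructor <;> linarith [le_sup' y hkW, inf'_le y hkW]

omit hc0 in
theorem cauchySeq (h : IsAlmostWindowAverage y L K c η) (hc : 0 < c) : CauchySeq y := by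
  set k : ℕ → ℕ := fun n => K + n * (L + 1)
  have hk : Tendsto k atTop atTop :=
    tendsto_atTop_mono (fun n => by simp only [k, id]; nlinarith) tendsto_id
  have hΘ := (tendsto_sum_nat_add η).comp hk
  have hosc : Tendsto (fun n => windowOsc y L (k n)) atTop (𝓝 0) := by
    refine tendsto_zero_of_le_mul_add (r := 1 - c ^ (L + 1))
      (sub_nonneg.2 (pow_le_one₀ hc.le h.le_one)) (sub_lt_self _ (pow_pos hc _))
      (fun n => windowOsc_nonneg y L _) (fun n => ?_) (by simpa using hΘ.const_mul 4)
    have := h.windowOsc_add_le hη0 hc.le hη (k := k n) (Nat.le_add_right _ _)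
    rwa [show k n + (L + 1) = k (n + 1) by simp only [k]; ring] at this
  rw [Metric.cauchySeq_iff']
  intro ε hε
  obtain ⟨n, hn⟩ := ((hosc.add hΘ).eventually (gt_mem_nhds (by simpa using hε))).exists
  exact ⟨k n, fun j hj =>
    (h.abs_sub_le_windowOsc_add hη0 hc.le hη (Nat.le_add_right _ _) hj).trans_lt hn⟩

end IsAlmostWindowAverage

theorem IsAlmostWindowAverage.exists_tendsto {y : ℕ → ℂ} {L K : ℕ} {c : ℝ} {η : ℕ → ℝ}
    (h : IsAlmostWindowAverage y L K c η) (hc : 0 < c) (hη0 : ∀ k, 0 ≤ η k)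
    (hη : Summable η) : ∃ z, Tendsto y atTop (𝓝 z) := by
  obtain ⟨u, hu⟩ := cauchySeq_tendsto_of_complete
    ((h.map Complex.reCLM Complex.reCLM_norm.le).cauchySeq hη0 hη hc)
  obtain ⟨v, hv⟩ := cauchySeq_tendsto_of_complete
    ((h.map Complex.imCLM Complex.imCLM_norm.le).cauchySeq hη0 hη hc)
  refine ⟨u + v * Complex.I, ?_⟩
  simpa using (Complex.continuous_ofReal.tendsto u |>.comp hu).add
    ((Complex.continuous_ofReal.tendsto v |>.comp hv).mul_const Complex.I)

@[simp] lemma greedyIdx_zero (a : ℕ → ℕ) : greedyIdx a 0 = [] := rfl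

section Greedy

variable {a : ℕ → ℕ} (ha1 : a 1 = 1) (hmono : ∀ n, 1 ≤ n → a n < a (n + 1))
include hmono

lemma apply_lt_apply_of_one_le {i j : ℕ} (hi : 1 ≤ i) (hij : i < j) : a i < a j := by
  induction j, hij using Nat.le_induction with
  | base => exact hmono i hi
  | succ j hj ih => exact ih.trans (hmono j (by omega))

lemma apply_le_apply_of_one_le {i j : ℕ} (hi : 1 ≤ i) (hij : i ≤ j) : a i ≤ a j := by
  rcases hij.eq_or_lt with rfl | hlt
  · rfl
  · exact (apply_lt_apply_of_one_le hmono hi hlt).le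

include ha1

lemma le_apply_of_one_le {i : ℕ} (hi : 1 ≤ i) : i ≤ a i := by
  induction i, hi using Nat.le_induction with
  | base => omega
  | succ i hi ih => have := hmono i hi; omega

lemma one_le_apply_of_one_le {i : ℕ} (hi : 1 ≤ i) : 1 ≤ a i :=
  ha1 ▸ apply_le_apply_of_one_le hmono le_rfl hi

lemma exists_greedy_top {r : ℕ} (hr : 1 ≤ r) : ∃ k, 1 ≤ k ∧ a k ≤ r ∧ r < a (k + 1) := by
  let P j := 1 ≤ j ∧ a j ≤ r
  have hP1 : P 1 := ⟨le_rfl, by rw [ha1]; exact hr⟩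
  refine ⟨Nat.findGreatest P r, Nat.findGreatest_spec hr hP1 |>.1,
    Nat.findGreatest_spec hr hP1 |>.2, ?_⟩
  by_contra! h
  have := le_apply_of_one_le ha1 hmono (i := Nat.findGreatest P r + 1) (by omega)
  exact Nat.findGreatest_is_greatest (P := P) (Nat.lt_succ_self _) (by omega) ⟨by omega, h⟩

lemma findGreatest_eq_of_lt_apply_succ {P : ℕ → Prop} [DecidablePred P] {k r : ℕ} (hk : 1 ≤ k)
    (hPk : P k) (hP : ∀ j, P j → a j ≤ r) (hr : r < a (k + 1)) : Nat.findGreatest P r = k := by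
  refine Nat.findGreatest_eq_iff.2 ⟨(le_apply_of_one_le ha1 hmono hk).trans (hP k hPk),
    fun _ => hPk, fun j hkj _ hPj => ?_⟩
  have := apply_le_apply_of_one_le hmono (by omega : 1 ≤ k + 1) hkj
  have := hP j hPj
  omega

lemma greedyIdxAux_congr_fuel (f₁ f₂ r : ℕ) (h₁ : r ≤ f₁) (h₂ : r ≤ f₂) :
    greedyIdxAux a f₁ r = greedyIdxAux a f₂ r := by
  induction f₁ generalizing f₂ r with
  | zero =>
    obtain rfl : r = 0 := by omega
    cases f₂ <;> simp [greedyIdxAux]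
  | succ f ih =>
    rcases Nat.eq_zero_or_pos r with rfl | hr
    · cases f₂ <;> simp [greedyIdxAux]
    obtain ⟨f₂, rfl⟩ : ∃ f, f₂ = f + 1 := ⟨f₂ - 1, by omega⟩
    obtain ⟨k, hk, h1, h2⟩ := exists_greedy_top ha1 hmono hr
    have := one_le_apply_of_one_le ha1 hmono hk
    simp only [greedyIdxAux, if_neg hr.ne']
    rw [findGreatest_eq_of_lt_apply_succ (P := fun j => 1 ≤ j ∧ a j ≤ r) ha1 hmono hk ⟨hk, h1⟩
      (fun _ h => h.2) h2]
    exact congrArg _ (ih _ _ (by omega) (by omega))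

lemma greedyIdx_eq_cons {k r : ℕ} (hk : 1 ≤ k) (h1 : a k ≤ r) (h2 : r < a (k + 1)) :
    greedyIdx a r = k :: greedyIdx a (r - a k) := by
  have := one_le_apply_of_one_le ha1 hmono hk
  obtain ⟨r, rfl⟩ : ∃ r', r = r' + 1 := ⟨r - 1, by omega⟩
  simp only [greedyIdx, greedyIdxAux, if_neg (Nat.succ_ne_zero r)]
  rw [findGreatest_eq_of_lt_apply_succ (P := fun j => 1 ≤ j ∧ a j ≤ r + 1) ha1 hmono hk
    ⟨hk, h1⟩ (fun _ h => h.2) h2]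
  exact congrArg _ (greedyIdxAux_congr_fuel ha1 hmono _ _ _ (by omega) le_rfl)

theorem greedy_induction {P : ℕ → Prop} (h0 : P 0)
    (hstep : ∀ k r, 1 ≤ k → a k ≤ r → r < a (k + 1) → P (r - a k) → P r) (r : ℕ) : P r := by
  induction r using Nat.strong_induction_on with
  | _ r ih =>
    rcases Nat.eq_zero_or_pos r with rfl | hr
    · exact h0
    obtain ⟨k, hk, h1, h2⟩ := exists_greedy_top ha1 hmono hr
    have := one_le_apply_of_one_le ha1 hmono hk
    exact hstep k r hk h1 h2 (ih _ (by omega))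

lemma one_le_and_le_of_mem_greedyIdx {r j : ℕ} (hj : j ∈ greedyIdx a r) : 1 ≤ j ∧ a j ≤ r := by
  induction r using greedy_induction ha1 hmono with
  | h0 => simp at hj
  | hstep k r hk h1 h2 ih =>
    rw [greedyIdx_eq_cons ha1 hmono hk h1 h2, List.mem_cons] at hj
    rcases hj with rfl | hj
    · exact ⟨hk, h1⟩
    · exact ⟨(ih hj).1, (ih hj).2.trans (Nat.sub_le _ _)⟩

lemma replSeq_add {b : ℕ → ℤ} {k m : ℕ} (hk : 1 ≤ k) (hm : a k + m < a (k + 1)) :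
    replSeq a b (a k + m) = b k + replSeq a b m := by
  simp [replSeq, greedyIdx_eq_cons ha1 hmono hk (Nat.le_add_right _ _) hm]

lemma greedyIdxCapAux_eq_greedyIdxAux {cap f r : ℕ} (hr : r < a (cap + 1)) :
    greedyIdxCapAux a cap f r = greedyIdxAux a f r := by
  induction f generalizing r with
  | zero => rfl
  | succ f ih =>
    rcases Nat.eq_zero_or_pos r with rfl | hr0
    · simp [greedyIdxCapAux, greedyIdxAux]
    obtain ⟨k, hk, h1, h2⟩ := exists_greedy_top ha1 hmono hr0
    have hkcap : k ≤ cap := by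
      by_contra!
      have := apply_le_apply_of_one_le hmono (by omega : 1 ≤ cap + 1) this
      omega
    simp only [greedyIdxCapAux, greedyIdxAux, if_neg hr0.ne']
    rw [findGreatest_eq_of_lt_apply_succ (P := fun j => 1 ≤ j ∧ a j ≤ r) ha1 hmono hk ⟨hk, h1⟩
        (fun _ h => h.2) h2,
      findGreatest_eq_of_lt_apply_succ (P := fun j => 1 ≤ j ∧ j ≤ cap ∧ a j ≤ r) ha1 hmono hk
        ⟨hk, hkcap, h1⟩ (fun _ h => h.2.2) h2]
    exact congrArg _ (ih (by omega))

lemma greedyIdxCap_eq_cons {k : ℕ} (hk : 1 ≤ k) :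
    greedyIdxCap a k (a (k + 1)) = k :: greedyIdx a (a (k + 1) - a k) := by
  have hlt := hmono k hk
  have := one_le_apply_of_one_le ha1 hmono hk
  have := le_apply_of_one_le ha1 hmono hk
  obtain ⟨r, hr⟩ : ∃ r, a (k + 1) = r + 1 := ⟨a (k + 1) - 1, by omega⟩
  have hfind : Nat.findGreatest (fun j => 1 ≤ j ∧ j ≤ k ∧ a j ≤ r + 1) (r + 1) = k :=
    Nat.findGreatest_eq_iff.2 ⟨by omega, fun _ => ⟨hk, le_rfl, by omega⟩,
      fun j hkj _ hj => by omega⟩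
  simp only [greedyIdxCap, hr, greedyIdxCapAux, if_neg (Nat.succ_ne_zero r), hfind]
  rw [greedyIdxCapAux_eq_greedyIdxAux ha1 hmono (by omega)]
  exact congrArg _ (greedyIdxAux_congr_fuel ha1 hmono _ _ _ (by omega) le_rfl)

lemma mem_Icc_of_mem_greedyIdx_sub {L k j : ℕ}
    (hsig : ∀ n, 2 ≤ n → ∀ i ∈ greedyIdxCap a (n - 1) (a n), n ≤ i + L) (hk : 1 ≤ k)
    (hj : j ∈ greedyIdx a (a (k + 1) - a k)) : j ∈ Icc (k - L) k := by
  have hL := hsig (k + 1) (by omega) j (by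
    rw [Nat.add_sub_cancel, greedyIdxCap_eq_cons ha1 hmono hk]
    exact List.mem_cons_of_mem _ hj)
  obtain ⟨hj1, hja⟩ := one_le_and_le_of_mem_greedyIdx ha1 hmono hj
  have hak := one_le_apply_of_one_le ha1 hmono hk
  have hjk : j ≤ k := by
    by_contra! hkj
    have := apply_le_apply_of_one_le hmono (by omega : 1 ≤ k + 1) hkj
    have := hmono k hk
    omega
  exact mem_Icc.2 ⟨by omega, hjk⟩

end Greedy

section ExpCirc

open Complex in
lemma expCirc_eq_exp (x : ℝ) : expCirc x = exp (I * (2 * Real.pi * x : ℝ)) := by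
  rw [expCirc]; push_cast; ring_nf

lemma norm_expCirc (x : ℝ) : ‖expCirc x‖ = 1 := by
  rw [expCirc_eq_exp, mul_comm]; exact Complex.norm_exp_ofReal_mul_I _

lemma expCirc_add (x y : ℝ) : expCirc (x + y) = expCirc x * expCirc y := by
  simp only [expCirc, ← Complex.exp_add]; push_cast; ring_nf

lemma expCirc_intCast (n : ℤ) : expCirc n = 1 := by
  rw [expCirc, ← Complex.exp_int_mul_two_pi_mul_I n]; push_cast; ring_nf

lemma norm_expCirc_sub_one_le (x : ℝ) : ‖expCirc x - 1‖ ≤ 2 * Real.pi * distToInt x := by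
  have hx : expCirc x = expCirc (x - round x) := by
    rw [← mul_one (expCirc (x - round x)), ← expCirc_intCast (round x), ← expCirc_add,
      sub_add_cancel]
  rw [hx, expCirc_eq_exp]
  refine Real.norm_exp_I_mul_ofReal_sub_one_le.trans_eq ?_
  rw [Real.norm_eq_abs, abs_mul, abs_of_pos (by positivity : 0 < 2 * Real.pi), distToInt]

end ExpCirc

noncomputable def weylSum (a : ℕ → ℕ) (b : ℕ → ℤ) (γ : ℝ) (N : ℕ) : ℂ :=
  ∑ n ∈ range N, expCirc (γ * replSeq a b n)

noncomputable def expDefect (b : ℕ → ℤ) (γ : ℝ) (i : ℕ) : ℝ := ‖expCirc (γ * b i) - 1‖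

lemma summable_expDefect {b : ℕ → ℤ} {γ : ℝ}
    (hsum : Summable fun i : ℕ => distToInt (γ * (b (i + 1) : ℝ))) :
    Summable (expDefect b γ) :=
  (summable_nat_add_iff 1).1 <| (hsum.mul_left (2 * Real.pi)).of_nonneg_of_le
    (fun _ => norm_nonneg _) (fun _ => norm_expCirc_sub_one_le _)

section WeylSum

variable {a : ℕ → ℕ} {b : ℕ → ℤ} {γ : ℝ}

lemma norm_weylSum_le (N : ℕ) : ‖weylSum a b γ N‖ ≤ N := by
  simpa [weylSum, norm_expCirc] using norm_sum_le (range N) fun n => expCirc (γ * replSeq a b n)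

variable (ha1 : a 1 = 1) (hmono : ∀ n, 1 ≤ n → a n < a (n + 1))
include ha1 hmono

lemma weylSum_add {k m : ℕ} (hk : 1 ≤ k) (hm : a k + m ≤ a (k + 1)) :
    weylSum a b γ (a k + m) = weylSum a b γ (a k) + expCirc (γ * b k) * weylSum a b γ m := by
  rw [weylSum, sum_range_add, weylSum, weylSum, mul_sum]
  congr 1
  refine sum_congr rfl fun n hn => ?_
  rw [replSeq_add ha1 hmono hk (by rw [mem_range] at hn; omega), ← expCirc_add]
  push_cast; ring_nf

lemma norm_weylSum_sub_sum_le (r : ℕ) :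
    ‖weylSum a b γ r - ((greedyIdx a r).map fun j => weylSum a b γ (a j)).sum‖ ≤
      ((greedyIdx a r).map fun j => expDefect b γ j * ((a (j + 1) : ℝ) - a j)).sum := by
  induction r using greedy_induction ha1 hmono with
  | h0 => simp [weylSum]
  | hstep k r hk h1 h2 ih =>
    rw [greedyIdx_eq_cons ha1 hmono hk h1 h2, List.map_cons, List.sum_cons, List.map_cons,
      List.sum_cons]
    set m := r - a k
    have hr : r = a k + m := by omega
    have hm : (m : ℝ) ≤ a (k + 1) - a k := by
      rw [le_sub_iff_add_le', ← Nat.cast_add, ← hr]; exact_mod_cast h2.le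
    rw [hr, weylSum_add ha1 hmono hk (by omega)]
    calc _ = ‖(expCirc (γ * b k) - 1) * weylSum a b γ m +
          (weylSum a b γ m - ((greedyIdx a m).map fun j => weylSum a b γ (a j)).sum)‖ := by
          ring_nf
      _ ≤ expDefect b γ k * m + _ := by
          refine (norm_add_le _ _).trans (add_le_add ?_ ih)
          rw [norm_mul]
          exact mul_le_mul_of_nonneg_left (norm_weylSum_le m) (norm_nonneg _)
      _ ≤ _ := by gcongr; exact norm_nonneg _

end WeylSum

section Averages

variable {a : ℕ → ℕ} {b : ℕ → ℤ} {γ : ℝ}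

lemma natCast_mul_weylSum_div (n : ℕ) : (n : ℂ) * (weylSum a b γ n / n) = weylSum a b γ n := by
  rcases eq_or_ne n 0 with rfl | hn
  · simp [weylSum]
  · exact mul_div_cancel₀ _ (Nat.cast_ne_zero.2 hn)

variable (ha1 : a 1 = 1) (hmono : ∀ n, 1 ≤ n → a n < a (n + 1))
include ha1 hmono

lemma sum_map_greedyIdx_cast {R : Type*} [AddMonoidWithOne R] (r : ℕ) :
    ((greedyIdx a r).map fun j => (a j : R)).sum = r := by
  induction r using greedy_induction ha1 hmono with
  | h0 => simp
  | hstep k r hk h1 h2 ih =>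
    rw [greedyIdx_eq_cons ha1 hmono hk h1 h2, List.map_cons, List.sum_cons, ih, ← Nat.cast_add,
      Nat.add_sub_cancel' h1]

lemma sum_map_greedyIdx_mul_le {δ : ℕ → ℝ} {J : ℕ} {e D : ℝ} (he : 0 ≤ e) (hD0 : 0 ≤ D)
    (hD : ∀ j, δ j ≤ D) (hJ : ∀ j, J < j → δ j ≤ e) (N : ℕ) :
    ((greedyIdx a N).map fun j => a j * δ j).sum ≤ e * N + D * a (J + 1) := by
  induction N using greedy_induction ha1 hmono with
  | h0 =>
    simp only [greedyIdx_zero, List.map_nil, List.sum_nil, Nat.cast_zero, mul_zero, zero_add]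
    positivity
  | hstep k r hk h1 h2 ih =>
    by_cases hkJ : J < k
    · rw [greedyIdx_eq_cons ha1 hmono hk h1 h2, List.map_cons, List.sum_cons]
      have := mul_le_mul_of_nonneg_left (hJ k hkJ) (Nat.cast_nonneg (a k))
      rw [Nat.cast_sub h1] at ih
      nlinarith
    · have hsum := List.sum_le_sum (l := greedyIdx a r) (f := fun j => a j * δ j)
        (g := fun j => D * a j) fun j _ => by
          rw [mul_comm]; exact mul_le_mul_of_nonneg_right (hD j) (Nat.cast_nonneg _)
      rw [List.sum_map_mul_left, sum_map_greedyIdx_cast ha1 hmono] at hsum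
      have : (r : ℝ) ≤ a (J + 1) := by
        exact_mod_cast h2.le.trans (apply_le_apply_of_one_le hmono (by omega) (by omega))
      nlinarith [Nat.cast_nonneg (α := ℝ) r]

lemma tendsto_sum_map_greedyIdx_mul_div {δ : ℕ → ℝ} (hδ0 : ∀ j, 0 ≤ δ j)
    (hδ : Tendsto δ atTop (𝓝 0)) :
    Tendsto (fun N : ℕ => ((greedyIdx a N).map fun j => a j * δ j).sum / N) atTop (𝓝 0) := by
  obtain ⟨D, hD⟩ := hδ.bddAbove_range
  have hD' : ∀ j, δ j ≤ D := fun j => hD ⟨j, rfl⟩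
  refine tendsto_order.2 ⟨fun x hx => Eventually.of_forall fun N => hx.trans_le <|
    div_nonneg (List.sum_nonneg ?_) (Nat.cast_nonneg N), fun x hx => ?_⟩
  · simp only [List.mem_map]
    rintro _ ⟨j, -, rfl⟩
    exact mul_nonneg (Nat.cast_nonneg _) (hδ0 j)
  obtain ⟨J, hJ⟩ := (hδ.eventually (gt_mem_nhds (half_pos hx))).exists_forall_of_atTop
  have hbound := sum_map_greedyIdx_mul_le ha1 hmono (half_pos hx).le ((hδ0 0).trans (hD' 0))
    hD' fun j hj => (hJ j hj.le).le
  filter_upwards [(tendsto_const_div_atTop_nhds_zero_nat (D * a (J + 1))).eventually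
    (gt_mem_nhds (half_pos hx)), eventually_gt_atTop 0] with N hN hN0
  have hN0' : (0 : ℝ) < N := Nat.cast_pos.2 hN0
  rw [div_lt_iff₀ hN0'] at hN ⊢
  linarith [hbound N]

end Averages

section WindowStep

variable {a : ℕ → ℕ} {b : ℕ → ℤ} {γ : ℝ} {s : ℝ} {L : ℕ}
  (ha1 : a 1 = 1) (hmono : ∀ n, 1 ≤ n → a n < a (n + 1))
  (hs : ∀ n, 1 ≤ n → (a (n + 1) : ℝ) < s * a n)
  (hsig : ∀ n, 2 ≤ n → ∀ i ∈ greedyIdxCap a (n - 1) (a n), n ≤ i + L)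
include ha1 hmono hs

lemma one_lt_of_growth : 1 < s := by
  have h1 := hs 1 le_rfl
  have h2 : (1 : ℝ) < a 2 := by exact_mod_cast ha1 ▸ hmono 1 le_rfl
  rw [ha1, Nat.cast_one, mul_one] at h1
  linarith

include hsig

lemma norm_weylSum_succ_sub_le {k : ℕ} (hk : 1 ≤ k) :
    ‖weylSum a b γ (a (k + 1)) - weylSum a b γ (a k) -
        ((greedyIdx a (a (k + 1) - a k)).map fun j => weylSum a b γ (a j)).sum‖ ≤
      s * (∑ t ∈ range (L + 1), expDefect b γ (k - t)) * a (k + 1) := by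
  set Δ := a (k + 1) - a k
  set σ := ∑ t ∈ range (L + 1), expDefect b γ (k - t)
  have hσ : ∀ j ∈ Icc (k - L) k, expDefect b γ j ≤ σ := fun j hj => by
    have hj' : k - (k - j) = j := by simp only [mem_Icc] at hj; omega
    rw [← hj']
    exact single_le_sum (f := fun t => expDefect b γ (k - t)) (fun t _ => norm_nonneg _)
      (mem_range.2 (by simp only [mem_Icc] at hj; omega))
  have hσ0 : 0 ≤ σ := sum_nonneg fun t _ => norm_nonneg _
  have hak := hmono k hk
  have hs0 : 0 < s := zero_lt_one.trans (one_lt_of_growth ha1 hmono hs)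
  have hsplit : weylSum a b γ (a (k + 1)) =
      weylSum a b γ (a k) + expCirc (γ * b k) * weylSum a b γ Δ := by
    rw [← weylSum_add ha1 hmono hk (by omega)]; congr 1; omega
  have hdigit : ∀ j ∈ greedyIdx a Δ, expDefect b γ j * ((a (j + 1) : ℝ) - a j) ≤
      σ * (s - 1) * a j := fun j hj => by
    have hj1 := (one_le_and_le_of_mem_greedyIdx ha1 hmono hj).1
    have hgap : (0 : ℝ) ≤ (a (j + 1) : ℝ) - a j :=
      sub_nonneg.2 (Nat.cast_le.2 (hmono j hj1).le)
    nlinarith [norm_nonneg (expCirc (γ * b j) - 1), hs j hj1,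
      hσ j (mem_Icc_of_mem_greedyIdx_sub ha1 hmono hsig hk hj)]
  calc _ = ‖(expCirc (γ * b k) - 1) * weylSum a b γ Δ +
        (weylSum a b γ Δ - ((greedyIdx a Δ).map fun j => weylSum a b γ (a j)).sum)‖ := by
        rw [hsplit]; ring_nf
    _ ≤ expDefect b γ k * Δ +
        ((greedyIdx a Δ).map fun j => expDefect b γ j * ((a (j + 1) : ℝ) - a j)).sum := by
        refine (norm_add_le _ _).trans (add_le_add ?_ (norm_weylSum_sub_sum_le ha1 hmono Δ))
        rw [norm_mul]
        exact mul_le_mul_of_nonneg_left (norm_weylSum_le Δ) (norm_nonneg _)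
    _ ≤ σ * Δ + ((greedyIdx a Δ).map fun j => σ * (s - 1) * a j).sum := by
        gcongr
        · exact hσ k (right_mem_Icc.2 (Nat.sub_le k L))
        · exact List.sum_le_sum hdigit
    _ = s * σ * Δ := by rw [List.sum_map_mul_left, sum_map_greedyIdx_cast ha1 hmono]; ring
    _ ≤ s * σ * a (k + 1) := by gcongr; exact_mod_cast Nat.sub_le _ _

theorem isAlmostWindowAverage_weylSum_div :
    IsAlmostWindowAverage (fun k => weylSum a b γ (a k) / a k) L 1 s⁻¹
      (fun k => s * ∑ t ∈ range (L + 1), expDefect b γ (k - t)) := by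
  intro k hk
  set d := greedyIdx a (a (k + 1) - a k)
  set y : ℕ → ℂ := fun k => weylSum a b γ (a k) / a k
  have hkW : k ∈ Icc (k - L) k := right_mem_Icc.2 (Nat.sub_le k L)
  have hdW : ∀ j ∈ d, j ∈ Icc (k - L) k := fun j hj =>
    mem_Icc_of_mem_greedyIdx_sub ha1 hmono hsig hk hj
  have hak : (0 : ℝ) < a k := Nat.cast_pos.2 (one_le_apply_of_one_le ha1 hmono hk)
  have hA : (0 : ℝ) < a (k + 1) := hak.trans (Nat.cast_lt.2 (hmono k hk))
  set v : ℕ → ℝ := fun j => (if j = k then (a k : ℝ) else 0) + d.count j * a j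
  have hvsum : ∑ j ∈ Icc (k - L) k, v j = a (k + 1) := by
    simp only [v, sum_add_distrib, sum_ite_eq', if_pos hkW, ← nsmul_eq_mul,
      ← List.sum_map_eq_sum_count_smul hdW]
    rw [sum_map_greedyIdx_cast ha1 hmono, Nat.cast_sub (hmono k hk).le]
    ring
  have hvy : ∑ j ∈ Icc (k - L) k, (v j : ℂ) * y j =
      weylSum a b γ (a k) + (d.map fun j => weylSum a b γ (a j)).sum := by
    rw [List.sum_map_eq_sum_count_smul hdW, ← if_pos hkW (α := ℂ) (t := weylSum a b γ (a k))
      (e := 0), ← sum_ite_eq' (Icc (k - L) k) k fun j => weylSum a b γ (a j), ← sum_add_distrib]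
    refine sum_congr rfl fun j _ => ?_
    simp only [v, y, nsmul_eq_mul]
    split_ifs with hj
    · subst hj
      push_cast
      rw [add_mul, mul_assoc, natCast_mul_weylSum_div]
    · push_cast
      rw [zero_add, zero_add, mul_assoc, natCast_mul_weylSum_div]
  have hs0 : 0 < s := zero_lt_one.trans (one_lt_of_growth ha1 hmono hs)
  refine ⟨fun j => v j / a (k + 1), fun j => by positivity, by rw [← sum_div, hvsum,
    div_self hA.ne'], ?_, ?_⟩
  · rw [le_div_iff₀ hA, inv_mul_le_iff₀ hs0]
    have hvk : (a k : ℝ) ≤ v k := by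
      simp only [v]; exact le_add_of_nonneg_right (by positivity)
    nlinarith [hs k hk]
  · have hsum : ∑ j ∈ Icc (k - L) k, (v j / a (k + 1)) • y j =
        (weylSum a b γ (a k) + (d.map fun j => weylSum a b γ (a j)).sum) / a (k + 1) := by
      simp only [Complex.real_smul, Complex.ofReal_div, div_mul_eq_mul_div, ← sum_div, hvy]
      norm_cast
    rw [hsum, show y (k + 1) = weylSum a b γ (a (k + 1)) / a (k + 1) from rfl, ← sub_div,
      norm_div, Complex.norm_natCast, div_le_iff₀ hA, ← sub_sub]
    exact norm_weylSum_succ_sub_le ha1 hmono hs hsig hk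

end WindowStep

section Limit

variable {a : ℕ → ℕ} {b : ℕ → ℤ} {γ : ℝ} {s : ℝ}
  (ha1 : a 1 = 1) (hmono : ∀ n, 1 ≤ n → a n < a (n + 1))
  (hs : ∀ n, 1 ≤ n → (a (n + 1) : ℝ) < s * a n)
include ha1 hmono hs

lemma norm_weylSum_sub_mul_le (z : ℂ) (N : ℕ) :
    ‖weylSum a b γ N - N * z‖ ≤ ((greedyIdx a N).map fun j =>
      a j * ((s - 1) * expDefect b γ j + ‖weylSum a b γ (a j) / a j - z‖)).sum := by
  induction N using greedy_induction ha1 hmono with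
  | h0 => simp [weylSum]
  | hstep k r hk h1 h2 ih =>
    rw [greedyIdx_eq_cons ha1 hmono hk h1 h2, List.map_cons, List.sum_cons]
    set m := r - a k
    have hr : r = a k + m := by omega
    have hm : (m : ℝ) ≤ (s - 1) * a k := by
      have := hs k hk
      have : (r : ℝ) < a (k + 1) := by exact_mod_cast h2
      rw [hr, Nat.cast_add] at this
      linarith
    have hε : 0 ≤ expDefect b γ k := norm_nonneg _
    calc ‖weylSum a b γ r - r * z‖
        = ‖(a k : ℂ) * (weylSum a b γ (a k) / a k - z) +
            (expCirc (γ * b k) - 1) * weylSum a b γ m + (weylSum a b γ m - m * z)‖ := by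
          rw [hr, weylSum_add ha1 hmono hk (by omega), mul_sub, natCast_mul_weylSum_div]
          push_cast; ring_nf
      _ ≤ a k * ‖weylSum a b γ (a k) / a k - z‖ + expDefect b γ k * m + _ := by
          refine (norm_add_le _ _).trans (add_le_add ((norm_add_le _ _).trans
            (add_le_add ?_ ?_)) ih)
          · rw [norm_mul, Complex.norm_natCast]
          · rw [norm_mul]
            exact mul_le_mul_of_nonneg_left (norm_weylSum_le m) hε
      _ ≤ _ := by nlinarith [mul_le_mul_of_nonneg_left hm hε]

theorem tendsto_weylSum_div {z : ℂ} (hε : Tendsto (expDefect b γ) atTop (𝓝 0))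
    (hz : Tendsto (fun k => weylSum a b γ (a k) / a k) atTop (𝓝 z)) :
    Tendsto (fun N : ℕ => weylSum a b γ N / N) atTop (𝓝 z) := by
  have hs1 := one_lt_of_growth ha1 hmono hs
  rw [tendsto_iff_norm_sub_tendsto_zero] at hz ⊢
  refine squeeze_zero' (Eventually.of_forall fun N => norm_nonneg _) ?_
    (tendsto_sum_map_greedyIdx_mul_div ha1 hmono
      (δ := fun j => (s - 1) * expDefect b γ j + ‖weylSum a b γ (a j) / a j - z‖)
      (fun j => add_nonneg (mul_nonneg (by linarith) (norm_nonneg _)) (norm_nonneg _))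
      (by simpa using (hε.const_mul (s - 1)).add hz))
  filter_upwards [eventually_gt_atTop 0] with N hN
  have hN' : (0 : ℝ) < N := Nat.cast_pos.2 hN
  rw [le_div_iff₀ hN', ← Complex.norm_natCast, ← norm_mul, sub_mul,
    div_mul_cancel₀ _ (Nat.cast_ne_zero.2 hN.ne'), mul_comm z]
  exact norm_weylSum_sub_mul_le ha1 hmono hs z N

end Limit

/-- Let `a` be a sequence of mild signature, `b` any sequence of
integers, and `A` the replacement sequence of `a` by `b`.  If `γ` is a real number
with `∑_{i=1}^{∞} ‖γ · b i‖ < ∞`, then the Weyl sums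
`x_N = (1/N) ∑_{n=0}^{N-1} e (γ · A n)` converge to some complex number. -/
theorem replSeq_weyl_sums_converge
    (a : ℕ → ℕ) (ha : MildSignature a) (b : ℕ → ℤ) (γ : ℝ)
    (hsum : Summable fun i : ℕ => distToInt (γ * (b (i + 1) : ℝ))) :
    ∃ z : ℂ,
      Tendsto
        (fun N : ℕ => (N : ℂ)⁻¹ * ∑ n ∈ Finset.range N,
          expCirc (γ * (replSeq a b n : ℝ)))
        atTop (nhds z) := by
  obtain ⟨ha1, hmono, ⟨L, hsig⟩, ⟨_, s, -, -, hgrowth⟩⟩ := ha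
  have hs : ∀ n, 1 ≤ n → (a (n + 1) : ℝ) < s * a n := fun n hn => (hgrowth n hn).2
  have hs0 : 0 < s := zero_lt_one.trans (one_lt_of_growth ha1 hmono hs)
  have hε := summable_expDefect hsum
  obtain ⟨z, hz⟩ := (isAlmostWindowAverage_weylSum_div (b := b) (γ := γ) ha1 hmono hs hsig)
    |>.exists_tendsto (inv_pos.2 hs0)
      (fun k => mul_nonneg hs0.le (sum_nonneg fun t _ => norm_nonneg _))
      ((summable_sum_range_sub hε (L + 1)).mul_left s)
  refine ⟨z, ?_⟩
  simpa only [inv_mul_eq_div, weylSum] using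
    tendsto_weylSum_div ha1 hmono hs hε.tendsto_atTop_zero hz
end

section
/- Let a : ℕ → ℕ be a sequence of natural numbers and suppose there are constants B and C such that a(n) ≤ B·n for each n and such that each natural number appears at most C times in the sequence a. Let γ be an irrational real number and suppose the empirical measures of the sequence γ·a(n) modulo 1 converge weakly to a probability measure μ on ℝ/ℤ. Then μ(I) ≤ 4BC·λ(I) for every arc I of ℝ/ℤ (where λ is the Haar probability measure), and consequently μ is absolutely continuous with respect to λ. -/
/-!
Weyl: for irrational `γ` the averages `M⁻¹ ∑_{m<M} g (m γ)` tend to `∫ g dλ` for every continuous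
`g`. For a character this is a geometric series; by linearity it extends to trigonometric
polynomials, and then to all `g`, because these are dense and the averaging functionals are
uniformly `1`-Lipschitz.

If `a n ≤ B n` and every value is taken at most `C` times, then for `g ≥ 0` we have
`∑_{1 ≤ n ≤ N} g (γ a n) ≤ C ∑_{m ≤ B N} g (γ m)`. Dividing by `N` and letting `N → ∞` gives
`∫ g dμ ≤ B C ∫ g dλ`. Testing this against thickened indicators of closed sets and using inner
regularity yields `μ ≤ B C • λ`, which implies both conclusions.
-/

open Filter MeasureTheory Topology
open scoped ENNReal NNReal BoundedContinuousFunction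

section BirkhoffAverage

variable (𝕜 : Type*) {X E : Type*} [TopologicalSpace X] [CompactSpace X] [RCLike 𝕜]
  [NormedAddCommGroup E] [NormedSpace 𝕜 E]

theorem lipschitzWith_birkhoffAverage_continuousMap (f : X → X) (n : ℕ) (x : X) :
    LipschitzWith 1 fun g : C(X, E) => birkhoffAverage 𝕜 f g n x := by
  refine LipschitzWith.of_dist_le_mul fun g h => ?_
  calc dist (birkhoffAverage 𝕜 f g n x) (birkhoffAverage 𝕜 f h n x)
      = ‖(n : 𝕜)⁻¹‖ * dist (birkhoffSum f g n x) (birkhoffSum f h n x) := dist_smul₀ _ _ _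
    _ ≤ ‖(n : 𝕜)⁻¹‖ * (n * dist g h) := by
      gcongr
      refine (dist_sum_sum_le _ _ _).trans ?_
      simpa using Finset.sum_le_sum (s := Finset.range n) fun k _ =>
        g.dist_apply_le_dist (g := h) (f^[k] x)
    _ ≤ 1 * dist g h := by
      rcases eq_or_ne n 0 with rfl | hn
      · simp
      · rw [norm_inv, RCLike.norm_natCast, inv_mul_cancel_left₀ (Nat.cast_ne_zero.2 hn)]
        simp

theorem isClosed_setOf_tendsto_birkhoffAverage_continuousMap (f : X → X) (x : X)
    {L : C(X, E) → E} (hL : Continuous L) :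
    IsClosed {g : C(X, E) | Tendsto (birkhoffAverage 𝕜 f g · x) atTop (𝓝 (L g))} :=
  (LipschitzWith.uniformEquicontinuous _ 1 fun n =>
    lipschitzWith_birkhoffAverage_continuousMap 𝕜 f n x).equicontinuous
      |>.isClosed_setOfPred_tendsto hL

end BirkhoffAverage

theorem ContinuousMap.continuous_integral {X E : Type*} [TopologicalSpace X] [CompactSpace X]
    [MeasurableSpace X] [BorelSpace X] [NormedAddCommGroup E] [NormedSpace ℝ E]
    [SecondCountableTopologyEither X E] (μ : Measure X) [IsFiniteMeasure μ] :
    Continuous fun g : C(X, E) => ∫ x, g x ∂μ :=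
  (MeasureTheory.continuous_integral.comp (ContinuousMap.toLp (E := E) 1 μ ℝ).continuous).congr
    fun g => integral_congr_ae (ContinuousMap.coeFn_toLp μ g)

theorem tendsto_inv_mul_geom_sum_nhds_zero {𝕜 : Type*} [RCLike 𝕜] {z : 𝕜} (hz : ‖z‖ ≤ 1)
    (hz1 : z ≠ 1) :
    Tendsto (fun N : ℕ => (N : 𝕜)⁻¹ * ∑ m ∈ Finset.range N, z ^ m) atTop (𝓝 0) := by
  refine squeeze_zero_norm (fun N => ?_) (tendsto_const_div_atTop_nhds_zero_nat (2 / ‖z - 1‖))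
  have hzN : ‖z ^ N - 1‖ ≤ 2 := by
    calc ‖z ^ N - 1‖ ≤ ‖z‖ ^ N + ‖(1 : 𝕜)‖ := (norm_sub_le _ _).trans_eq (by rw [norm_pow])
      _ ≤ 2 := by norm_num; linarith [pow_le_one₀ (norm_nonneg z) hz (n := N)]
  rw [geom_sum_eq hz1, norm_mul, norm_inv, RCLike.norm_natCast, norm_div, div_eq_inv_mul (_ / _)]
  gcongr

namespace AddCircle

variable {T : ℝ}

theorem birkhoffAverage_fourier (x y : AddCircle T) (n : ℤ) (N : ℕ) :
    birkhoffAverage ℂ (· + x) (fourier n) N y =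
      fourier n y * ((N : ℂ)⁻¹ * ∑ m ∈ Finset.range N, fourier n x ^ m) := by
  have hmul (m : ℕ) : fourier n (y + m • x) = fourier n y * fourier n x ^ m := by
    simp [fourier_apply, smul_add, smul_comm n m, toCircle_add, toCircle_nsmul]
  simp only [birkhoffAverage, birkhoffSum, add_right_iterate_apply, hmul, ← Finset.mul_sum,
    smul_eq_mul]
  ring

variable [Fact (0 < T)]

theorem integral_fourier (n : ℤ) :
    ∫ y, fourier n y ∂(haarAddCircle (T := T)) = if n = 0 then 1 else (0 : ℂ) := by
  have h := congr_fun (fourierCoeff_fourier (T := T) n) 0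
  simp only [fourierCoeff, neg_zero, fourier_zero, one_smul] at h
  rw [h, Pi.single_apply]
  simp [eq_comm]

theorem fourier_ne_one_of_not_isOfFinAddOrder {x : AddCircle T} (hx : ¬IsOfFinAddOrder x)
    {n : ℤ} (hn : n ≠ 0) : fourier n x ≠ 1 := by
  intro h
  refine hx (isOfFinAddOrder_iff_zsmul_eq_zero.2
    ⟨n, hn, injective_toCircle (Fact.out : 0 < T).ne' ?_⟩)
  rw [toCircle_zero]
  exact Circle.coe_inj.1 h

theorem tendsto_birkhoffAverage_fourier {x : AddCircle T} (hx : ¬IsOfFinAddOrder x) (n : ℤ)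
    (y : AddCircle T) :
    Tendsto (birkhoffAverage ℂ (· + x) (fourier n) · y) atTop
      (𝓝 (∫ z, fourier n z ∂(haarAddCircle (T := T)))) := by
  rw [integral_fourier]
  split_ifs with hn
  · subst hn
    refine tendsto_const_nhds.congr' ((eventually_ne_atTop 0).mono fun N hN => ?_)
    simp [birkhoffAverage_fourier, hN]
  · simp_rw [birkhoffAverage_fourier]
    simpa using (tendsto_inv_mul_geom_sum_nhds_zero (Circle.norm_coe _).le
      (fourier_ne_one_of_not_isOfFinAddOrder hx hn)).const_mul (fourier n y)

/-- Weyl's equidistribution theorem. -/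
theorem tendsto_birkhoffAverage_integral {x : AddCircle T} (hx : ¬IsOfFinAddOrder x)
    (g : C(AddCircle T, ℂ)) (y : AddCircle T) :
    Tendsto (birkhoffAverage ℂ (· + x) g · y) atTop (𝓝 (∫ z, g z ∂(haarAddCircle (T := T)))) := by
  set P := Submodule.span ℂ (Set.range (fourier (T := T)))
  set S := {g : C(AddCircle T, ℂ) | Tendsto (birkhoffAverage ℂ (· + x) g · y) atTop
    (𝓝 (∫ z, g z ∂(haarAddCircle (T := T))))}
  have hS : IsClosed S := isClosed_setOf_tendsto_birkhoffAverage_continuousMap ℂ _ y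
    (ContinuousMap.continuous_integral _)
  have hPS : (P : Set C(AddCircle T, ℂ)) ⊆ S := by
    intro p hp
    induction hp using Submodule.span_induction with
    | mem _ h => obtain ⟨n, rfl⟩ := h; exact tendsto_birkhoffAverage_fourier hx n y
    | zero => simp [S, birkhoffAverage, birkhoffSum]
    | add p q _ _ hp hq =>
      have hint (r : C(AddCircle T, ℂ)) : Integrable r haarAddCircle :=
        r.continuous.integrable_of_hasCompactSupport (.of_compactSpace _)
      simpa [S, birkhoffAverage_add, integral_add (hint p) (hint q)] using hp.add hq
    | smul c p _ hp =>
      have hsmul (N : ℕ) : birkhoffAverage ℂ (· + x) ⇑(c • p) N y =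
          c • birkhoffAverage ℂ (· + x) p N y :=
        (map_birkhoffAverage ℂ ℂ (DistribSMul.toAddMonoidHom ℂ c) _ _ _ _).symm
      simpa only [S, Set.mem_ofPred_eq, hsmul, ContinuousMap.smul_apply, integral_smul]
        using hp.const_smul c
  have hg : g ∈ closure (P : Set C(AddCircle T, ℂ)) := by
    rw [← Submodule.topologicalClosure_coe, span_fourier_closure_eq_top]
    trivial
  exact hS.closure_subset_iff.2 hPS hg

theorem tendsto_birkhoffAverage_integral_real {x : AddCircle T} (hx : ¬IsOfFinAddOrder x)
    (g : C(AddCircle T, ℝ)) (y : AddCircle T) :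
    Tendsto (birkhoffAverage ℝ (· + x) g · y) atTop (𝓝 (∫ z, g z ∂(haarAddCircle (T := T)))) := by
  have h := (Complex.continuous_re.tendsto _).comp
    (tendsto_birkhoffAverage_integral hx ⟨fun z => (g z : ℂ), by fun_prop⟩ y)
  have hre (N : ℕ) : (birkhoffAverage ℂ (· + x) (fun z => (g z : ℂ)) N y).re =
      birkhoffAverage ℝ (· + x) g N y :=
    map_birkhoffAverage ℂ ℝ Complex.reAddGroupHom _ _ _ _
  simpa only [Function.comp_def, ContinuousMap.coe_mk, hre, integral_complex_ofReal,
    Complex.ofReal_re] using h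

end AddCircle

theorem Irrational.tendsto_inv_mul_sum_range {γ : ℝ} (hγ : Irrational γ)
    (g : C(UnitAddCircle, ℝ)) :
    Tendsto (fun M : ℕ => (M : ℝ)⁻¹ * ∑ m ∈ Finset.range M, g ((γ * m : ℝ) : UnitAddCircle))
      atTop (𝓝 (∫ x, g x)) := by
  have hγ' : ¬IsOfFinAddOrder (γ : UnitAddCircle) := by
    rw [AddCircle.not_isOfFinAddOrder_iff_forall_rat_ne_div]
    simpa [eq_comm] using hγ.ne_rat
  have h := AddCircle.tendsto_birkhoffAverage_integral_real hγ' g 0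
  simp only [birkhoffAverage, birkhoffSum, add_right_iterate_apply, zero_add] at h
  have hvol : (volume : Measure UnitAddCircle) = AddCircle.haarAddCircle := by
    rw [AddCircle.volume_eq_smul_haarAddCircle, ENNReal.ofReal_one, one_smul]
  simpa only [smul_eq_mul, hvol, ← AddCircle.coe_nsmul, nsmul_eq_mul, mul_comm γ] using h

namespace Finset

theorem sum_comp_le_nsmul_sum_of_card_fiber_le {ι κ M : Type*} [DecidableEq κ]
    [AddCommMonoid M] [PartialOrder M] [IsOrderedAddMonoid M] {s : Finset ι} {t : Finset κ}
    {a : ι → κ} {φ : κ → M} {C : ℕ} (hst : Set.MapsTo a s t)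
    (hC : ∀ m ∈ t, #{n ∈ s | a n = m} ≤ C) (hφ : ∀ m ∈ t, 0 ≤ φ m) :
    ∑ n ∈ s, φ (a n) ≤ C • ∑ m ∈ t, φ m := by
  rw [← sum_fiberwise_of_maps_to hst, smul_sum]
  gcongr with m hm
  rw [sum_congr rfl fun n hn => by rw [(mem_filter.1 hn).2], sum_const]
  exact nsmul_le_nsmul_left (hφ m hm) (hC m hm)

end Finset

theorem tendsto_inv_mul_sum_range_mul_add_one {u : ℕ → ℝ} {L : ℝ}
    (hu : Tendsto (fun M : ℕ => (M : ℝ)⁻¹ * ∑ m ∈ Finset.range M, u m) atTop (𝓝 L)) (B : ℕ) :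
    Tendsto (fun N : ℕ => (N : ℝ)⁻¹ * ∑ m ∈ Finset.range (B * N + 1), u m) atTop
      (𝓝 (B * L)) := by
  have hinv : Tendsto (fun N : ℕ => (N : ℝ)⁻¹) atTop (𝓝 0) :=
    tendsto_inv_atTop_zero.comp tendsto_natCast_atTop_atTop
  rcases B.eq_zero_or_pos with rfl | hB
  · simpa using hinv.mul_const (u 0)
  have hM : Tendsto (fun N : ℕ => B * N + 1) atTop atTop :=
    tendsto_atTop_mono (fun N => Nat.le_succ_of_le (Nat.le_mul_of_pos_left N hB)) tendsto_id
  have hratio : Tendsto (fun N : ℕ => (B : ℝ) + (N : ℝ)⁻¹) atTop (𝓝 B) := by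
    simpa using hinv.const_add (B : ℝ)
  refine (hratio.mul (hu.comp hM)).congr' ((eventually_ne_atTop 0).mono fun N hN => ?_)
  have hN' : (N : ℝ) ≠ 0 := Nat.cast_ne_zero.2 hN
  simp only [Function.comp_apply, Nat.cast_add, Nat.cast_mul, Nat.cast_one]
  field_simp

theorem MeasureTheory.Measure.le_smul_of_forall_integral_le {X : Type*} [PseudoMetricSpace X]
    [MeasurableSpace X] [BorelSpace X] {μ ν : Measure X} [IsFiniteMeasure μ] [IsFiniteMeasure ν]
    {K : ℝ≥0} (h : ∀ g : X →ᵇ ℝ≥0, ∫ x, (g x : ℝ) ∂μ ≤ (K : ℝ) * ∫ x, (g x : ℝ) ∂ν) :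
    μ ≤ K • ν := by
  have hclosed {F : Set X} (hF : IsClosed F) : μ F ≤ K * ν F := by
    have hδ (n : ℕ) : (0 : ℝ) < 1 / (n + 1) := by positivity
    have hreal : μ.real F ≤ (K : ℝ) * ν.real F :=
      le_of_tendsto_of_tendsto'
        (tendsto_integral_thickenedIndicator_of_isClosed μ hF hδ
          tendsto_one_div_add_atTop_nhds_zero_nat)
        ((tendsto_integral_thickenedIndicator_of_isClosed ν hF hδ
          tendsto_one_div_add_atTop_nhds_zero_nat).const_mul _)
        fun n => h _
    rw [← ofReal_measureReal, ← ofReal_measureReal, ← ENNReal.ofReal_coe_nnreal,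
      ← ENNReal.ofReal_mul (by positivity)]
    exact ENNReal.ofReal_le_ofReal hreal
  refine Measure.le_iff.2 fun s hs => ?_
  rw [hs.measure_eq_iSup_isClosed_of_ne_top (measure_ne_top μ s)]
  refine iSup_le fun F => iSup_le fun _ => iSup_le fun hF => (hclosed hF).trans ?_
  rw [Measure.smul_apply, ENNReal.smul_def, smul_eq_mul]
  gcongr

theorem integral_le_of_linear_growth {a : ℕ → ℕ} {B C : ℕ} (hB : ∀ n, 1 ≤ n → a n ≤ B * n)
    (hC : ∀ m : ℕ, ∀ S : Finset ℕ, (∀ n ∈ S, a n = m) → S.card ≤ C) {γ : ℝ} (hγ : Irrational γ)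
    {μ : Measure UnitAddCircle}
    (hconv : ∀ g : C(UnitAddCircle, ℝ),
      Tendsto (fun N : ℕ => (N : ℝ)⁻¹ * ∑ n ∈ Finset.Icc 1 N, g ((γ * a n : ℝ) : UnitAddCircle))
        atTop (𝓝 (∫ x, g x ∂μ)))
    (g : C(UnitAddCircle, ℝ)) (hg : 0 ≤ g) :
    ∫ x, g x ∂μ ≤ B * C * ∫ x, g x := by
  have hsum (N : ℕ) : ∑ n ∈ Finset.Icc 1 N, g ((γ * a n : ℝ) : UnitAddCircle) ≤
      C * ∑ m ∈ Finset.range (B * N + 1), g ((γ * m : ℝ) : UnitAddCircle) := by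
    rw [← nsmul_eq_mul]
    refine Finset.sum_comp_le_nsmul_sum_of_card_fiber_le (φ := fun m : ℕ => g ((γ * m : ℝ) : _))
      (fun n hn => ?_) (fun m _ => hC m _ fun n hn => (Finset.mem_filter.1 hn).2) fun m _ => hg _
    obtain ⟨h1, hN⟩ := Finset.mem_Icc.1 hn
    exact Finset.mem_range.2 (Nat.lt_succ_of_le ((hB n h1).trans (Nat.mul_le_mul_left B hN)))
  have hlim := (tendsto_inv_mul_sum_range_mul_add_one (hγ.tendsto_inv_mul_sum_range g) B).const_mul
    (C : ℝ)
  refine (le_of_tendsto_of_tendsto' (hconv g) hlim fun N => ?_).trans_eq (by ring)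
  rw [mul_left_comm]
  exact mul_le_mul_of_nonneg_left (hsum N) (by positivity)

/-- Let `a : ℕ → ℕ` be a sequence with `a n ≤ B n` for each
`n ≥ 1` and such that each natural number appears at most `C` times in the
sequence.  Let `γ` be irrational and suppose the empirical measures of
`γ · a n mod 1` converge weakly to a probability measure `μ` on `ℝ/ℤ`.  Then
`μ I ≤ 4 B C · λ I` for every arc `I` of `ℝ/ℤ` (where `λ` is the Haar
probability measure), and consequently `μ` is absolutely continuous with
respect to `λ`. -/
theorem limit_measure_absolutely_continuous_of_linear_growth
    (a : ℕ → ℕ) (B C : ℕ)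
    (hB : ∀ n, 1 ≤ n → a n ≤ B * n)
    (hC : ∀ m : ℕ, ∀ S : Finset ℕ, (∀ n ∈ S, a n = m) → S.card ≤ C)
    (γ : ℝ) (hγ : Irrational γ)
    (μ : Measure UnitAddCircle) (hμ : IsProbabilityMeasure μ)
    (hconv : ∀ g : C(UnitAddCircle, ℝ),
      Tendsto
        (fun N : ℕ => (N : ℝ)⁻¹ * ∑ n ∈ Finset.Icc 1 N,
          g ((γ * (a n : ℝ) : ℝ) : UnitAddCircle))
        atTop (nhds (∫ x, g x ∂μ))) :
    (∀ t l : ℝ,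
      μ ((fun x : ℝ => (x : UnitAddCircle)) '' Set.Icc t (t + l)) ≤
        ENNReal.ofReal (4 * (B : ℝ) * (C : ℝ)) *
          volume ((fun x : ℝ => (x : UnitAddCircle)) '' Set.Icc t (t + l))) ∧
    μ ≪ (volume : Measure UnitAddCircle) := by
  have hle : μ ≤ ((B * C : ℕ) : ℝ≥0) • volume :=
    Measure.le_smul_of_forall_integral_le fun g => by
      push_cast
      exact integral_le_of_linear_growth hB hC hγ hconv ⟨fun x => g x, by fun_prop⟩
        fun x => (g x).2
  refine ⟨fun t l => (hle _).trans ?_, Measure.absolutelyContinuous_of_le_smul hle⟩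
  rw [Measure.smul_apply, ENNReal.smul_def, smul_eq_mul]
  gcongr
  rw [show 4 * (B : ℝ) * C = ((4 * (B * C) : ℕ) : ℝ) by push_cast; ring, ENNReal.ofReal_natCast,
    ENNReal.coe_natCast]
  exact_mod_cast Nat.le_mul_of_pos_left _ four_pos
end

section
/- Let P be a monic polynomial in ℤ[x] and let R be the set of real numbers β such that ‖β·a(n)‖ → 0 for every sequence of integers a : ℕ → ℤ satisfying the linear recurrence with characteristic polynomial P. Then R is a subring of ℝ: it contains the integers and is closed under addition and multiplication. -/
/-!
Addition is handled by the subadditivity of `‖·‖`. For multiplication, let `b n` be the integer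
nearest to `y · a n`. With `cᵢ` the coefficients of `P`, the integer `∑ cᵢ b (n + i)` equals
`-∑ cᵢ (y · a (n + i) - b (n + i))`, which is eventually smaller than `1` in absolute value,
hence `0`: a tail of `b` satisfies the recurrence. Then `‖x y a n‖ ≤ ‖x b n‖ + |x| ‖y a n‖ → 0`.
-/

open Filter

/-- A sequence `a` satisfies the linear recurrence with (monic) characteristic
polynomial `P`, i.e. `∑_{i=0}^{deg P} (coeff i of P) · a (n+i) = 0` for all `n`. -/
def SatisfiesLinRec (P : Polynomial ℤ) (a : ℕ → ℤ) : Prop :=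
  ∀ n : ℕ, ∑ i ∈ Finset.range (P.natDegree + 1), P.coeff i * a (n + i) = 0

/-- The set of real numbers `β` such that `‖β · a n‖ → 0` for *every* integer
sequence `a` satisfying the linear recurrence with characteristic polynomial `P`. -/
def recRing (P : Polynomial ℤ) : Set ℝ :=
  {β : ℝ | ∀ a : ℕ → ℤ, SatisfiesLinRec P a →
    Tendsto (fun n : ℕ => distToInt (β * (a n : ℝ))) atTop (nhds 0)}

lemma distToInt_nonneg (x : ℝ) : 0 ≤ distToInt x := abs_nonneg _

lemma distToInt_intCast (m : ℤ) : distToInt m = 0 := by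
  simp [distToInt]

lemma distToInt_add_le (u v : ℝ) : distToInt (u + v) ≤ distToInt u + distToInt v :=
  calc distToInt (u + v) ≤ |u + v - ((round u + round v : ℤ) : ℝ)| := round_le _ _
    _ = |(u - round u) + (v - round v)| := by push_cast; ring_nf
    _ ≤ distToInt u + distToInt v := abs_add_le _ _

lemma distToInt_add_le_abs (u v : ℝ) : distToInt (u + v) ≤ distToInt u + |v| :=
  calc distToInt (u + v) ≤ |u + v - round u| := round_le _ _
    _ = |(u - round u) + v| := by ring_nf
    _ ≤ distToInt u + |v| := abs_add_le _ _

lemma distToInt_mul_le (x t : ℝ) :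
    distToInt (x * t) ≤ distToInt (x * round t) + |x| * distToInt t :=
  calc distToInt (x * t) = distToInt (x * round t + x * (t - round t)) := by ring_nf
    _ ≤ distToInt (x * round t) + |x * (t - round t)| := distToInt_add_le_abs _ _
    _ = distToInt (x * round t) + |x| * distToInt t := by rw [abs_mul]; rfl

namespace SatisfiesLinRec

variable {P : Polynomial ℤ} {a : ℕ → ℤ}

lemma comp_add (ha : SatisfiesLinRec P a) (N : ℕ) : SatisfiesLinRec P (fun n ↦ a (n + N)) := by
  intro n
  simpa only [add_right_comm] using ha (n + N)

lemma round_mul (ha : SatisfiesLinRec P a) {y δ : ℝ} (hδ : ∀ n, distToInt (y * a n) ≤ δ)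
    (hCδ : (∑ i ∈ Finset.range (P.natDegree + 1), |(P.coeff i : ℝ)|) * δ < 1) :
    SatisfiesLinRec P (fun n ↦ round (y * a n)) := by
  intro n
  set S := Finset.range (P.natDegree + 1)
  have hrec : ∑ i ∈ S, (P.coeff i : ℝ) * a (n + i) = 0 := by exact_mod_cast ha n
  have hsum : ((∑ i ∈ S, P.coeff i * round (y * a (n + i)) : ℤ) : ℝ) =
      -∑ i ∈ S, (P.coeff i : ℝ) * (y * a (n + i) - round (y * a (n + i))) := by
    push_cast
    simp only [mul_sub, Finset.sum_sub_distrib, mul_left_comm _ y, ← Finset.mul_sum, hrec]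
    ring
  have hlt : |((∑ i ∈ S, P.coeff i * round (y * a (n + i)) : ℤ) : ℝ)| < 1 := by
    rw [hsum, abs_neg]
    calc _ ≤ ∑ i ∈ S, |(P.coeff i : ℝ)| * distToInt (y * a (n + i)) := by
          refine (Finset.abs_sum_le_sum_abs _ _).trans_eq ?_
          simp only [abs_mul, distToInt]
      _ ≤ ∑ i ∈ S, |(P.coeff i : ℝ)| * δ := by gcongr; exact hδ _
      _ = (∑ i ∈ S, |(P.coeff i : ℝ)|) * δ := (Finset.sum_mul ..).symm
      _ < 1 := hCδ
  exact Int.abs_lt_one_iff.mp (by exact_mod_cast hlt)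

end SatisfiesLinRec

namespace recRing

variable {P : Polynomial ℤ}

lemma intCast_mem (m : ℤ) : (m : ℝ) ∈ recRing P := by
  intro a _
  simp_rw [← Int.cast_mul, distToInt_intCast]
  exact tendsto_const_nhds

lemma add_mem {x y : ℝ} (hx : x ∈ recRing P) (hy : y ∈ recRing P) : x + y ∈ recRing P := by
  intro a ha
  have hsum := (hx a ha).add (hy a ha)
  rw [zero_add] at hsum
  refine squeeze_zero (fun _ ↦ distToInt_nonneg _) (fun n ↦ ?_) hsum
  rw [add_mul]
  exact distToInt_add_le _ _

lemma mul_mem {x y : ℝ} (hx : x ∈ recRing P) (hy : y ∈ recRing P) : x * y ∈ recRing P := by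
  intro a ha
  set C := ∑ i ∈ Finset.range (P.natDegree + 1), |(P.coeff i : ℝ)|
  have hC : 0 ≤ C := Finset.sum_nonneg fun _ _ ↦ abs_nonneg _
  obtain ⟨N, hN⟩ := eventually_atTop.mp <|
    (hy a ha).eventually (ge_mem_nhds (show (0 : ℝ) < 1 / (C + 1) by positivity))
  have htail := ha.comp_add N
  have hround : SatisfiesLinRec P (fun n ↦ round (y * a (n + N))) :=
    htail.round_mul (fun n ↦ hN _ (Nat.le_add_left N n)) (by
      rw [mul_one_div, div_lt_one (by positivity)]; linarith)
  have hbound := (hx _ hround).add ((hy _ htail).const_mul |x|)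
  rw [zero_add, mul_zero] at hbound
  refine (tendsto_add_atTop_iff_nat N).mp <|
    squeeze_zero (fun _ ↦ distToInt_nonneg _) (fun n ↦ ?_) hbound
  rw [mul_assoc]
  exact distToInt_mul_le x _

end recRing

theorem recRing_is_subring_general (P : Polynomial ℤ) :
    (∀ m : ℤ, (m : ℝ) ∈ recRing P) ∧
    (∀ x ∈ recRing P, ∀ y ∈ recRing P, x + y ∈ recRing P) ∧
    (∀ x ∈ recRing P, ∀ y ∈ recRing P, x * y ∈ recRing P) :=
  ⟨recRing.intCast_mem, fun _ hx _ hy ↦ recRing.add_mem hx hy,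
    fun _ hx _ hy ↦ recRing.mul_mem hx hy⟩

/-- For a monic `P ∈ ℤ[x]`, the set `R` of real numbers `β`
such that `‖β · a n‖ → 0` for every integer sequence `a` satisfying the linear
recurrence with characteristic polynomial `P` is a subring of `ℝ`: it contains
the integers and is closed under addition and multiplication. -/
theorem recRing_is_subring (P : Polynomial ℤ) (hmonic : P.Monic) :
    (∀ m : ℤ, (m : ℝ) ∈ recRing P) ∧
    (∀ x ∈ recRing P, ∀ y ∈ recRing P, x + y ∈ recRing P) ∧
    (∀ x ∈ recRing P, ∀ y ∈ recRing P, x * y ∈ recRing P) :=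
  recRing_is_subring_general P
end

section
/- Let a : ℕ → ℤ be the sequence with a(1) = 1, a(2) = 2, a(3) = 3, a(4) = 4 and a(n) = 10·a(n−2) − a(n−4) for n > 4. Then for a real number β, ‖β·a(n)‖ → 0 as n → ∞ if and only if β ∈ ℤ[√6], i.e., if and only if there exist integers u, v with β = u + v·√6. -/
/-!
The solutions of `x (n + 4) = 10 * x (n + 2) - x n` that tend to `0` are exactly those on which the
two-step shift acts by the eigenvalue `5 - 2√6 < 1`; the other root of `t² - 10 t + 1` is `> 1`.
If `‖β * a n‖ → 0`, the nearest integers `c n` to `β * a n` eventually satisfy the recurrence as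
well, since its defect on them is an integer tending to `0`; extended backwards, `c` makes
`β * a - c` a decaying solution. Reading the eigenvalue condition off the first four terms and
using the irrationality of `√6` gives `β = (3 c₀ - c₁) + (2 c₀ - c₁) √6`. Conversely `√6 * a n`
differs from an integer solution by a decaying one, so `(u + v √6) * a n` is an integer plus a
term tending to `0`.
-/

open Filter

open Real Topology

lemma distToInt_add_intCast (x : ℝ) (m : ℤ) : distToInt (x + m) = distToInt x := by
  simp only [distToInt, round_add_intCast, Int.cast_add, add_sub_add_right_eq_sub]

lemma distToInt_le_abs (x : ℝ) : distToInt x ≤ |x| := by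
  simpa [distToInt] using round_le x 0

lemma tendsto_distToInt_iff {ι : Type*} {l : Filter ι} (y : ι → ℝ) :
    Tendsto (fun i => distToInt (y i)) l (𝓝 0) ↔ Tendsto (fun i => y i - round (y i)) l (𝓝 0) :=
  (tendsto_zero_iff_abs_tendsto_zero _).symm

lemma eventually_eq_zero_of_tendsto_intCast {ι : Type*} {l : Filter ι} {k : ι → ℤ}
    (h : Tendsto (fun i => (k i : ℝ)) l (𝓝 0)) : ∀ᶠ i in l, k i = 0 := by
  filter_upwards [h.eventually (Metric.ball_mem_nhds 0 one_pos)] with i hi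
  rw [dist_zero_right, Real.norm_eq_abs, ← Int.cast_abs] at hi
  exact Int.abs_lt_one_iff.mp (by exact_mod_cast hi)

lemma eq_zero_of_abs_le_abs_add_of_tendsto {g : ℕ → ℝ} {p : ℕ} (hp : 0 < p)
    (hg : ∀ n, |g n| ≤ |g (n + p)|) (hlim : Tendsto g atTop (𝓝 0)) (n : ℕ) : g n = 0 := by
  have hmono : ∀ k, |g n| ≤ |g (n + p * k)| := by
    intro k
    induction k with
    | zero => simp
    | succ k ih => exact ih.trans (by simpa [mul_add, add_assoc] using hg (n + p * k))
  have hsub : Tendsto (fun k => n + p * k) atTop atTop :=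
    tendsto_atTop_mono (fun k => (Nat.le_mul_of_pos_left k hp).trans (Nat.le_add_left _ _))
      tendsto_id
  have hlim' : Tendsto (fun k => |g (n + p * k)|) atTop (𝓝 0) := by
    simpa using (hlim.comp hsub).abs
  exact abs_nonpos_iff.mp (ge_of_tendsto' hlim' hmono)

lemma tendsto_zero_of_forall_add_eq_mul {F : ℕ → ℝ} {p : ℕ} {μ : ℝ} (hp : 0 < p) (hμ : |μ| < 1)
    (hF : ∀ n, F (n + p) = μ * F n) : Tendsto F atTop (𝓝 0) := by
  have hclosed : ∀ n, F n = μ ^ (n / p) * F (n % p) := by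
    intro n
    induction n using Nat.strong_induction_on with
    | _ n ih =>
      rcases lt_or_ge n p with h | h
      · simp [Nat.div_eq_of_lt h, Nat.mod_eq_of_lt h]
      · obtain ⟨m, rfl⟩ := Nat.exists_eq_add_of_le' h
        rw [hF, ih m (by omega), Nat.add_div_right _ hp, Nat.add_mod_right, pow_succ]
        ring
  refine squeeze_zero_norm (a := fun n => |μ| ^ (n / p) * ∑ r ∈ Finset.range p, |F r|)
    (fun n => ?_) ?_
  · rw [hclosed n, norm_mul, norm_pow, Real.norm_eq_abs, Real.norm_eq_abs]
    gcongr
    exact Finset.single_le_sum (f := fun r => |F r|) (fun _ _ => abs_nonneg _)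
      (Finset.mem_range.mpr (Nat.mod_lt _ hp))
  · simpa using ((tendsto_pow_atTop_nhds_zero_of_lt_one (abs_nonneg μ) hμ).comp
      (Nat.tendsto_div_const_atTop hp.ne')).mul_const (∑ r ∈ Finset.range p, |F r|)

def SatisfiesRecurrence {R : Type*} [Ring R] (x : ℕ → R) : Prop :=
  ∀ n, x (n + 4) = 10 * x (n + 2) - x n

namespace SatisfiesRecurrence

variable {R : Type*} [Ring R] {x y : ℕ → R}

lemma sub (hx : SatisfiesRecurrence x) (hy : SatisfiesRecurrence y) :
    SatisfiesRecurrence (fun n => x n - y n) := fun n => by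
  dsimp only; rw [hx n, hy n]; noncomm_ring

lemma const_mul (hx : SatisfiesRecurrence x) (c : R) :
    SatisfiesRecurrence (fun n => c * x n) := fun n => by
  dsimp only; rw [hx n, mul_sub, ← mul_assoc, ← mul_assoc, (Commute.ofNat_right c 10).eq]

lemma intCast {x : ℕ → ℤ} (hx : SatisfiesRecurrence x) :
    SatisfiesRecurrence (fun n => (x n : R)) := fun n => by
  dsimp only; rw [hx n]; push_cast; rfl

end SatisfiesRecurrence

lemma SatisfiesRecurrence.sub_mul_eq_mul_sub {R : Type*} [CommRing R] {x : ℕ → R}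
    (hx : SatisfiesRecurrence x) {l m : R} (hsum : l + m = 10) (hprod : l * m = 1) (n : ℕ) :
    x (n + 4) - m * x (n + 2) = l * (x (n + 2) - m * x n) := by
  linear_combination hx n - x (n + 2) * hsum + x n * hprod

lemma exists_satisfiesRecurrence_eq_of_ge {R : Type*} [Ring R] {x : ℕ → R} {N : ℕ}
    (hx : ∀ n ≥ N, x (n + 4) = 10 * x (n + 2) - x n) :
    ∃ y, SatisfiesRecurrence y ∧ ∀ n ≥ N, y n = x n := by
  induction N generalizing x with
  | zero => exact ⟨x, fun n => hx n (Nat.zero_le n), fun _ _ => rfl⟩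
  | succ N ih =>
    set x' := Function.update x N (10 * x (N + 2) - x (N + 4))
    have hx'N : ∀ n ≥ N, x' n = if n = N then 10 * x (N + 2) - x (N + 4) else x n :=
      fun n _ => Function.update_apply ..
    obtain ⟨y, hy, hyx⟩ := ih (x := x') fun n hn => by
      rw [hx'N n hn, hx'N (n + 2) (by omega), hx'N (n + 4) (by omega)]
      rcases hn.eq_or_lt with rfl | hlt
      · simp
      · simp only [show n ≠ N by omega, show n + 2 ≠ N by omega, show n + 4 ≠ N by omega,
          if_false]
        exact hx n hlt
    refine ⟨y, hy, fun n hn => ?_⟩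
    rw [hyx n (by omega), hx'N n (by omega), if_neg (by omega)]

lemma exists_forall_ge_recurrence_of_tendsto_sub_intCast {y : ℕ → ℝ} (hy : SatisfiesRecurrence y)
    {c : ℕ → ℤ} (h : Tendsto (fun n => y n - c n) atTop (𝓝 0)) :
    ∃ N, ∀ n ≥ N, c (n + 4) = 10 * c (n + 2) - c n := by
  set F := fun n => y n - c n
  have hdefect : Tendsto (fun n => ((10 * c (n + 2) - c n - c (n + 4) : ℤ) : ℝ)) atTop (𝓝 0) := by
    have := ((h.comp (tendsto_add_atTop_nat 4)).sub
      ((h.comp (tendsto_add_atTop_nat 2)).const_mul 10)).add h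
    refine (by simpa using this : Tendsto (fun n => F (n + 4) - 10 * F (n + 2) + F n) _ _).congr
      fun n => ?_
    simp only [F]
    push_cast
    linear_combination hy n
  obtain ⟨N, hN⟩ := eventually_atTop.mp (eventually_eq_zero_of_tendsto_intCast hdefect)
  exact ⟨N, fun n hn => by linarith [hN n hn]⟩

lemma sqrt_six_sq : √6 ^ 2 = 6 := Real.sq_sqrt (by norm_num)

lemma two_lt_sqrt_six : 2 < √6 := by
  nlinarith [sqrt_six_sq, Real.sqrt_nonneg 6]

lemma sqrt_six_lt_five_halves : √6 < 5 / 2 := by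
  nlinarith [sqrt_six_sq, Real.sqrt_nonneg 6]

lemma int_eq_zero_of_add_mul_sqrt_six_eq_zero {p q : ℤ} (h : (p : ℝ) + q * √6 = 0) : q = 0 := by
  by_contra hq
  have hirr : Irrational √6 := by
    have hsq : ¬IsSquare 6 := by
      rintro ⟨r, hr⟩
      have : r ≤ 3 := by nlinarith
      interval_cases r <;> omega
    simpa using irrational_sqrt_natCast_iff.mpr hsq
  exact ((hirr.intCast_mul hq).intCast_add p).ne_zero h

lemma SatisfiesRecurrence.tendsto_zero_iff {F : ℕ → ℝ} (hF : SatisfiesRecurrence F) :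
    Tendsto F atTop (𝓝 0) ↔ F 2 = (5 - 2 * √6) * F 0 ∧ F 3 = (5 - 2 * √6) * F 1 := by
  set g := fun n => F (n + 2) - (5 - 2 * √6) * F n
  have hg : ∀ n, g (n + 2) = (5 + 2 * √6) * g n := hF.sub_mul_eq_mul_sub (by ring)
    (by linear_combination -4 * sqrt_six_sq)
  constructor
  · intro hlim
    have hglim : Tendsto g atTop (𝓝 0) := by
      simpa using (hlim.comp (tendsto_add_atTop_nat 2)).sub (hlim.const_mul (5 - 2 * √6))
    have hgrow : ∀ n, |g n| ≤ |g (n + 2)| := fun n => by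
      rw [hg, abs_mul, abs_of_pos (a := 5 + 2 * √6) (by linarith [two_lt_sqrt_six])]
      exact le_mul_of_one_le_left (abs_nonneg _) (by linarith [two_lt_sqrt_six])
    exact ⟨sub_eq_zero.mp (eq_zero_of_abs_le_abs_add_of_tendsto two_pos hgrow hglim 0),
      sub_eq_zero.mp (eq_zero_of_abs_le_abs_add_of_tendsto two_pos hgrow hglim 1)⟩
  · rintro ⟨h0, h1⟩
    have hg0 : ∀ n, g n = 0 := by
      intro n
      induction n using Nat.twoStepInduction with
      | zero => exact sub_eq_zero.mpr h0
      | one => exact sub_eq_zero.mpr h1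
      | more n ih _ => rw [hg, ih, mul_zero]
    refine tendsto_zero_of_forall_add_eq_mul two_pos ?_ fun n => sub_eq_zero.mp (hg0 n)
    rw [abs_lt]
    constructor <;> linarith [two_lt_sqrt_six, sqrt_six_lt_five_halves]

lemma eq_add_mul_sqrt_six_of_eq_mul {β : ℝ} {c₀ c₁ c₂ c₃ : ℤ}
    (h₀ : β * 3 - c₂ = (5 - 2 * √6) * (β - c₀)) (h₁ : β * 4 - c₃ = (5 - 2 * √6) * (β * 2 - c₁)) :
    β = (3 * c₀ - c₁ : ℤ) + (2 * c₀ - c₁ : ℤ) * √6 := by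
  have hc : 2 * c₂ - 16 * c₀ - c₃ + 7 * c₁ = 0 := by
    have := int_eq_zero_of_add_mul_sqrt_six_eq_zero
      (p := 6 * c₂ - 78 * c₀ - 2 * c₃ + 34 * c₁) (q := 2 * (c₃ + 16 * c₀ - 2 * c₂ - 7 * c₁)) (by
        push_cast
        linear_combination (4 * √6 - 6) * h₀ - (2 * √6 - 2) * h₁ + (8 * c₀ - 4 * c₁) * sqrt_six_sq)
    omega
  have hcR : (2 * c₂ - 16 * c₀ - c₃ + 7 * c₁ : ℝ) = 0 := by exact_mod_cast hc
  push_cast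
  linear_combination h₀ - h₁ / 2 + hcR / 2

/-- `√6 * x n - sqrtSixApprox n` is a decaying solution when `x` starts with `1, 2, 3, 4`. -/
def sqrtSixApprox : ℕ → ℤ
  | 0 => -1
  | 1 => -3
  | 2 => 7
  | 3 => 9
  | n + 4 => 10 * sqrtSixApprox (n + 2) - sqrtSixApprox n

lemma satisfiesRecurrence_sqrtSixApprox : SatisfiesRecurrence sqrtSixApprox := fun _ => rfl

lemma tendsto_distToInt_mul_iff {x : ℕ → ℤ} (hx : SatisfiesRecurrence x) (h0 : x 0 = 1)
    (h1 : x 1 = 2) (h2 : x 2 = 3) (h3 : x 3 = 4) (β : ℝ) :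
    Tendsto (fun n => distToInt (β * x n)) atTop (𝓝 0) ↔ ∃ u v : ℤ, β = u + v * √6 := by
  have hxR : SatisfiesRecurrence (fun n => (x n : ℝ)) := hx.intCast
  constructor
  · intro h
    rw [tendsto_distToInt_iff] at h
    obtain ⟨N, hN⟩ := exists_forall_ge_recurrence_of_tendsto_sub_intCast (hxR.const_mul β) h
    obtain ⟨c, hc, hcN⟩ := exists_satisfiesRecurrence_eq_of_ge (x := fun n => round (β * x n)) hN
    have hF : Tendsto (fun n => β * x n - c n) atTop (𝓝 0) :=
      h.congr' (eventually_atTop.mpr ⟨N, fun n hn => by simp only [hcN n hn]⟩)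
    obtain ⟨e₀, e₁⟩ := ((hxR.const_mul β).sub hc.intCast).tendsto_zero_iff.mp hF
    simp only [h0, h1, h2, h3, Int.cast_one, Int.cast_ofNat, mul_one] at e₀ e₁
    exact ⟨_, _, eq_add_mul_sqrt_six_of_eq_mul e₀ e₁⟩
  · rintro ⟨u, v, rfl⟩
    have hT : Tendsto (fun n => √6 * x n - sqrtSixApprox n) atTop (𝓝 0) := by
      refine ((hxR.const_mul _).sub satisfiesRecurrence_sqrtSixApprox.intCast).tendsto_zero_iff.mpr
        ⟨?_, ?_⟩
      · simp only [h0, h2, sqrtSixApprox]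
        push_cast
        linear_combination 2 * sqrt_six_sq
      · simp only [h1, h3, sqrtSixApprox]
        push_cast
        linear_combination 4 * sqrt_six_sq
    refine squeeze_zero (fun _ => abs_nonneg _) (fun n => ?_)
      (by simpa using (hT.const_mul (v : ℝ)).abs)
    have hsplit : (u + v * √6) * x n
        = v * (√6 * x n - sqrtSixApprox n) + ((u * x n + v * sqrtSixApprox n : ℤ) : ℝ) := by
      push_cast; ring
    rw [hsplit, distToInt_add_intCast]
    exact (distToInt_le_abs _).trans_eq (abs_mul _ _)

/-- Let `a` be the integer sequence with `a 1 = 1`, `a 2 = 2`,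
`a 3 = 3`, `a 4 = 4` and `a n = 10 a (n-2) - a (n-4)` for `n > 4`.  Then for a
real number `β`, `‖β · a n‖ → 0` if and only if `β ∈ ℤ[√6]`, i.e. iff there are
integers `u, v` with `β = u + v √6`. -/
theorem distToInt_tendsto_zero_iff_mem_Zsqrt6
    (a : ℕ → ℤ) (h1 : a 1 = 1) (h2 : a 2 = 2) (h3 : a 3 = 3) (h4 : a 4 = 4)
    (hrec : ∀ n, 4 < n → a n = 10 * a (n - 2) - a (n - 4)) (β : ℝ) :
    Tendsto (fun n : ℕ => distToInt (β * (a n : ℝ))) atTop (nhds 0) ↔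
      ∃ u v : ℤ, β = (u : ℝ) + (v : ℝ) * Real.sqrt 6 := by
  have hx : SatisfiesRecurrence (fun n => a (n + 1)) := fun n => hrec (n + 5) (by omega)
  rw [← tendsto_add_atTop_iff_nat 1]
  exact tendsto_distToInt_mul_iff hx h1 h2 h3 h4 β
end
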